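/- arXiv:2405.11108 — 4 statements merged into one kernel-verified Lean document; each statement's English description precedes it below -/
import Mathlib

section
/- Let a, b ∈ ℂ with b ≠ −1. Then every commutative associative bilinear multiplication · on the deformative Schrödinger–Witt algebra 𝒲(a,b,1/2) satisfying the transposed Poisson compatibility 2·(z·[x,y]) = [z·x, y] + [x, z·y] for all x, y, z is identically zero; that is, 𝒲(a,b,1/2) admits no nontrivial transposed Poisson structure when b ≠ −1. -/
/-- Basis of the deformative Schrödinger–Witt algebra 𝒲(a,b,1/2):
`L m`, `I m`, and `Y m` (the latter denotes `Y_{m+1/2}`). -/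
inductive SWBasis : Type
  | L : ℤ → SWBasis
  | I : ℤ → SWBasis
  | Y : ℤ → SWBasis

/-- Underlying vector space of 𝒲(a,b,1/2): the free ℂ-module on `SWBasis`. -/
abbrev SW : Type := SWBasis →₀ ℂ

noncomputable def Lb (m : ℤ) : SW := Finsupp.single (SWBasis.L m) 1
noncomputable def Ib (m : ℤ) : SW := Finsupp.single (SWBasis.I m) 1
noncomputable def Yb (m : ℤ) : SW := Finsupp.single (SWBasis.Y m) 1

/-- The Lie bracket of 𝒲(a,b,1/2) on basis elements. -/
noncomputable def swBracketBasis (a b : ℂ) : SWBasis → SWBasis → SW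
  | SWBasis.L m, SWBasis.L n => ((n : ℂ) - (m : ℂ)) • Lb (m + n)
  | SWBasis.L m, SWBasis.I n => ((n : ℂ) + b * (m : ℂ) + a) • Ib (m + n)
  | SWBasis.I m, SWBasis.L n => -(((m : ℂ) + b * (n : ℂ) + a) • Ib (n + m))
  | SWBasis.L m, SWBasis.Y n =>
      ((n : ℂ) + 1 / 2 + ((b - 1) * (m : ℂ) + a) / 2) • Yb (m + n)
  | SWBasis.Y m, SWBasis.L n =>
      -(((m : ℂ) + 1 / 2 + ((b - 1) * (n : ℂ) + a) / 2) • Yb (n + m))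
  | SWBasis.Y m, SWBasis.Y n => ((n : ℂ) - (m : ℂ)) • Ib (m + n + 1)
  | _, _ => 0

/-- The Lie bracket of 𝒲(a,b,1/2), extended bilinearly from the basis. -/
noncomputable def swBracket (a b : ℂ) : SW →ₗ[ℂ] SW →ₗ[ℂ] SW :=
  Finsupp.lift (SW →ₗ[ℂ] SW) ℂ SWBasis fun x =>
    Finsupp.lift SW ℂ SWBasis fun y => swBracketBasis a b x y

/-- `φ` is a ½-derivation of 𝒲(a,b,1/2). -/
def IsHalfDerivationSW (a b : ℂ) (φ : SW →ₗ[ℂ] SW) : Prop :=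
  ∀ x y : SW, φ (swBracket a b x y) =
    (1 / 2 : ℂ) • (swBracket a b (φ x) y + swBracket a b x (φ y))

noncomputable instance : DecidableEq SWBasis := Classical.decEq _

lemma swBracket_single_single (a b : ℂ) (x y : SWBasis) (c d : ℂ) :
    swBracket a b (Finsupp.single x c) (Finsupp.single y d) = (c*d) • swBracketBasis a b x y := by
  simp [swBracket, Finsupp.lift_apply, Finsupp.sum_single_index, smul_smul]

lemma brkR_LL (a b : ℂ) (u : SW) (n q : ℤ) :
    (swBracket a b u (Lb n)) (SWBasis.L q) = (2*(n:ℂ) - q) * u (SWBasis.L (q - n)) := by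
  induction u using Finsupp.induction_linear with
  | zero => simp
  | add f g hf hg => simp only [map_add, LinearMap.add_apply, Finsupp.add_apply, hf, hg]; ring
  | single x c =>
    rw [show Lb n = Finsupp.single (SWBasis.L n) (1:ℂ) from rfl, swBracket_single_single]
    cases x with
    | L p =>
      simp only [swBracketBasis, Lb, Finsupp.smul_apply, Finsupp.single_apply, smul_eq_mul,
        SWBasis.L.injEq]
      split_ifs with h1 h2 h2
      · obtain rfl : p = q - n := by omega
        push_cast; ring
      · omega
      · omega
      · ring
    | I p => simp [swBracketBasis, Ib, Finsupp.single_apply]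
    | Y p => simp [swBracketBasis, Yb, Finsupp.single_apply]

lemma brkR_LI (a b : ℂ) (u : SW) (n q : ℤ) :
    (swBracket a b u (Lb n)) (SWBasis.I q) = -((q:ℂ) - n + b*n + a) * u (SWBasis.I (q - n)) := by
  induction u using Finsupp.induction_linear with
  | zero => simp
  | add f g hf hg => simp only [map_add, LinearMap.add_apply, Finsupp.add_apply, hf, hg]; ring
  | single x c =>
    rw [show Lb n = Finsupp.single (SWBasis.L n) (1:ℂ) from rfl, swBracket_single_single]
    cases x with
    | L p => simp [swBracketBasis, Lb, Finsupp.single_apply]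
    | I p =>
      simp only [swBracketBasis, Ib, Finsupp.smul_apply, Finsupp.neg_apply, Finsupp.single_apply,
        smul_eq_mul, SWBasis.I.injEq]
      split_ifs with h1 h2 h2
      · obtain rfl : p = q - n := by omega
        push_cast; ring
      · omega
      · omega
      · ring
    | Y p => simp [swBracketBasis, Yb, Finsupp.single_apply]

lemma brkR_LY (a b : ℂ) (u : SW) (n q : ℤ) :
    (swBracket a b u (Lb n)) (SWBasis.Y q)
      = -((q:ℂ) - n + 1/2 + ((b-1)*n + a)/2) * u (SWBasis.Y (q - n)) := by
  induction u using Finsupp.induction_linear with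
  | zero => simp
  | add f g hf hg => simp only [map_add, LinearMap.add_apply, Finsupp.add_apply, hf, hg]; ring
  | single x c =>
    rw [show Lb n = Finsupp.single (SWBasis.L n) (1:ℂ) from rfl, swBracket_single_single]
    cases x with
    | L p => simp [swBracketBasis, Lb, Finsupp.single_apply]
    | I p => simp [swBracketBasis, Ib, Finsupp.single_apply]
    | Y p =>
      simp only [swBracketBasis, Yb, Finsupp.smul_apply, Finsupp.neg_apply, Finsupp.single_apply,
        smul_eq_mul, SWBasis.Y.injEq]
      split_ifs with h1 h2 h2
      · obtain rfl : p = q - n := by omega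
        push_cast; ring
      · omega
      · omega
      · ring

lemma brkR_IL (a b : ℂ) (u : SW) (n q : ℤ) :
    (swBracket a b u (Ib n)) (SWBasis.L q) = 0 := by
  induction u using Finsupp.induction_linear with
  | zero => simp
  | add f g hf hg => simp only [map_add, LinearMap.add_apply, Finsupp.add_apply, hf, hg]; ring
  | single x c =>
    rw [show Ib n = Finsupp.single (SWBasis.I n) (1:ℂ) from rfl, swBracket_single_single]
    cases x <;> simp [swBracketBasis, Lb, Ib, Yb, Finsupp.single_apply]

lemma brkR_II (a b : ℂ) (u : SW) (n q : ℤ) :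
    (swBracket a b u (Ib n)) (SWBasis.I q) = ((n:ℂ) + b*((q:ℂ)-n) + a) * u (SWBasis.L (q - n)) := by
  induction u using Finsupp.induction_linear with
  | zero => simp
  | add f g hf hg => simp only [map_add, LinearMap.add_apply, Finsupp.add_apply, hf, hg]; ring
  | single x c =>
    rw [show Ib n = Finsupp.single (SWBasis.I n) (1:ℂ) from rfl, swBracket_single_single]
    cases x with
    | L p =>
      simp only [swBracketBasis, Ib, Finsupp.smul_apply, Finsupp.single_apply, smul_eq_mul,
        SWBasis.I.injEq, SWBasis.L.injEq]
      split_ifs with h1 h2 h2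
      · obtain rfl : p = q - n := by omega
        push_cast; ring
      · omega
      · omega
      · ring
    | I p => simp [swBracketBasis, Ib, Lb, Finsupp.single_apply]
    | Y p => simp [swBracketBasis, Yb, Lb, Finsupp.single_apply]

lemma brkR_IY (a b : ℂ) (u : SW) (n q : ℤ) :
    (swBracket a b u (Ib n)) (SWBasis.Y q) = 0 := by
  induction u using Finsupp.induction_linear with
  | zero => simp
  | add f g hf hg => simp only [map_add, LinearMap.add_apply, Finsupp.add_apply, hf, hg]; ring
  | single x c =>
    rw [show Ib n = Finsupp.single (SWBasis.I n) (1:ℂ) from rfl, swBracket_single_single]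
    cases x <;> simp [swBracketBasis, Lb, Ib, Yb, Finsupp.single_apply]

lemma brkR_YL (a b : ℂ) (u : SW) (n q : ℤ) :
    (swBracket a b u (Yb n)) (SWBasis.L q) = 0 := by
  induction u using Finsupp.induction_linear with
  | zero => simp
  | add f g hf hg => simp only [map_add, LinearMap.add_apply, Finsupp.add_apply, hf, hg]; ring
  | single x c =>
    rw [show Yb n = Finsupp.single (SWBasis.Y n) (1:ℂ) from rfl, swBracket_single_single]
    cases x <;> simp [swBracketBasis, Lb, Ib, Yb, Finsupp.single_apply]

lemma brkR_YI (a b : ℂ) (u : SW) (n q : ℤ) :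
    (swBracket a b u (Yb n)) (SWBasis.I q) = (2*(n:ℂ) + 1 - q) * u (SWBasis.Y (q - n - 1)) := by
  induction u using Finsupp.induction_linear with
  | zero => simp
  | add f g hf hg => simp only [map_add, LinearMap.add_apply, Finsupp.add_apply, hf, hg]; ring
  | single x c =>
    rw [show Yb n = Finsupp.single (SWBasis.Y n) (1:ℂ) from rfl, swBracket_single_single]
    cases x with
    | L p => simp [swBracketBasis, Lb, Yb, Finsupp.single_apply]
    | I p => simp [swBracketBasis, Ib, Yb, Finsupp.single_apply]
    | Y p =>
      simp only [swBracketBasis, Ib, Finsupp.smul_apply, Finsupp.single_apply, smul_eq_mul,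
        SWBasis.I.injEq, SWBasis.Y.injEq]
      split_ifs with h1 h2 h2
      · obtain rfl : p = q - n - 1 := by omega
        push_cast; ring
      · omega
      · omega
      · ring

lemma brkR_YY (a b : ℂ) (u : SW) (n q : ℤ) :
    (swBracket a b u (Yb n)) (SWBasis.Y q)
      = ((n:ℂ) + 1/2 + ((b-1)*((q:ℂ)-n) + a)/2) * u (SWBasis.L (q - n)) := by
  induction u using Finsupp.induction_linear with
  | zero => simp
  | add f g hf hg => simp only [map_add, LinearMap.add_apply, Finsupp.add_apply, hf, hg]; ring
  | single x c =>
    rw [show Yb n = Finsupp.single (SWBasis.Y n) (1:ℂ) from rfl, swBracket_single_single]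
    cases x with
    | L p =>
      simp only [swBracketBasis, Yb, Finsupp.smul_apply, Finsupp.single_apply, smul_eq_mul,
        SWBasis.Y.injEq, SWBasis.L.injEq]
      split_ifs with h1 h2 h2
      · obtain rfl : p = q - n := by omega
        push_cast; ring
      · omega
      · omega
      · ring
    | I p => simp [swBracketBasis, Ib, Lb, Finsupp.single_apply]
    | Y p => simp [swBracketBasis, Ib, Lb, Finsupp.single_apply]

lemma brkL_LL (a b : ℂ) (u : SW) (m q : ℤ) :
    (swBracket a b (Lb m) u) (SWBasis.L q) = ((q:ℂ) - 2*m) * u (SWBasis.L (q - m)) := by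
  induction u using Finsupp.induction_linear with
  | zero => simp
  | add f g hf hg => simp only [map_add, Finsupp.add_apply, hf, hg]; ring
  | single x c =>
    rw [show Lb m = Finsupp.single (SWBasis.L m) (1:ℂ) from rfl, swBracket_single_single]
    cases x with
    | L p =>
      simp only [swBracketBasis, Lb, Finsupp.smul_apply, Finsupp.single_apply, smul_eq_mul,
        SWBasis.L.injEq]
      split_ifs with h1 h2 h2
      · obtain rfl : p = q - m := by omega
        push_cast; ring
      · omega
      · omega
      · ring
    | I p => simp [swBracketBasis, Ib, Finsupp.single_apply]
    | Y p => simp [swBracketBasis, Yb, Finsupp.single_apply]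

lemma brkL_LI (a b : ℂ) (u : SW) (m q : ℤ) :
    (swBracket a b (Lb m) u) (SWBasis.I q) = ((q:ℂ) - m + b*m + a) * u (SWBasis.I (q - m)) := by
  induction u using Finsupp.induction_linear with
  | zero => simp
  | add f g hf hg => simp only [map_add, Finsupp.add_apply, hf, hg]; ring
  | single x c =>
    rw [show Lb m = Finsupp.single (SWBasis.L m) (1:ℂ) from rfl, swBracket_single_single]
    cases x with
    | L p => simp [swBracketBasis, Lb, Finsupp.single_apply]
    | I p =>
      simp only [swBracketBasis, Ib, Finsupp.smul_apply, Finsupp.single_apply, smul_eq_mul,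
        SWBasis.I.injEq]
      split_ifs with h1 h2 h2
      · obtain rfl : p = q - m := by omega
        push_cast; ring
      · omega
      · omega
      · ring
    | Y p => simp [swBracketBasis, Yb, Finsupp.single_apply]

lemma brkL_LY (a b : ℂ) (u : SW) (m q : ℤ) :
    (swBracket a b (Lb m) u) (SWBasis.Y q)
      = ((q:ℂ) - m + 1/2 + ((b-1)*m + a)/2) * u (SWBasis.Y (q - m)) := by
  induction u using Finsupp.induction_linear with
  | zero => simp
  | add f g hf hg => simp only [map_add, Finsupp.add_apply, hf, hg]; ring
  | single x c =>
    rw [show Lb m = Finsupp.single (SWBasis.L m) (1:ℂ) from rfl, swBracket_single_single]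
    cases x with
    | L p => simp [swBracketBasis, Lb, Finsupp.single_apply]
    | I p => simp [swBracketBasis, Ib, Finsupp.single_apply]
    | Y p =>
      simp only [swBracketBasis, Yb, Finsupp.smul_apply, Finsupp.single_apply, smul_eq_mul,
        SWBasis.Y.injEq]
      split_ifs with h1 h2 h2
      · obtain rfl : p = q - m := by omega
        push_cast; ring
      · omega
      · omega
      · ring

lemma brkL_II (a b : ℂ) (u : SW) (m q : ℤ) :
    (swBracket a b (Ib m) u) (SWBasis.I q) = -((m:ℂ) + b*((q:ℂ)-m) + a) * u (SWBasis.L (q - m)) := by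
  induction u using Finsupp.induction_linear with
  | zero => simp
  | add f g hf hg => simp only [map_add, Finsupp.add_apply, hf, hg]; ring
  | single x c =>
    rw [show Ib m = Finsupp.single (SWBasis.I m) (1:ℂ) from rfl, swBracket_single_single]
    cases x with
    | L p =>
      simp only [swBracketBasis, Ib, Finsupp.smul_apply, Finsupp.neg_apply, Finsupp.single_apply,
        smul_eq_mul, SWBasis.I.injEq, SWBasis.L.injEq]
      split_ifs with h1 h2 h2
      · obtain rfl : p = q - m := by omega
        push_cast; ring
      · omega
      · omega
      · ring
    | I p => simp [swBracketBasis, Lb, Finsupp.single_apply]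
    | Y p => simp [swBracketBasis, Lb, Finsupp.single_apply]

lemma brkL_YI (a b : ℂ) (u : SW) (m q : ℤ) :
    (swBracket a b (Yb m) u) (SWBasis.I q) = ((q:ℂ) - 2*m - 1) * u (SWBasis.Y (q - m - 1)) := by
  induction u using Finsupp.induction_linear with
  | zero => simp
  | add f g hf hg => simp only [map_add, Finsupp.add_apply, hf, hg]; ring
  | single x c =>
    rw [show Yb m = Finsupp.single (SWBasis.Y m) (1:ℂ) from rfl, swBracket_single_single]
    cases x with
    | L p => simp [swBracketBasis, Yb, Finsupp.single_apply]
    | I p => simp [swBracketBasis, Yb, Finsupp.single_apply]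
    | Y p =>
      simp only [swBracketBasis, Ib, Finsupp.smul_apply, Finsupp.single_apply, smul_eq_mul,
        SWBasis.I.injEq, SWBasis.Y.injEq]
      split_ifs with h1 h2 h2
      · obtain rfl : p = q - m - 1 := by omega
        push_cast; ring
      · omega
      · omega
      · ring

lemma brkL_YL (a b : ℂ) (u : SW) (m q : ℤ) :
    (swBracket a b (Yb m) u) (SWBasis.L q) = 0 := by
  induction u using Finsupp.induction_linear with
  | zero => simp
  | add f g hf hg => simp only [map_add, Finsupp.add_apply, hf, hg]; ring
  | single x c =>
    rw [show Yb m = Finsupp.single (SWBasis.Y m) (1:ℂ) from rfl, swBracket_single_single]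
    cases x <;> simp [swBracketBasis, Lb, Ib, Yb, Finsupp.single_apply]

lemma two_kill {X c1 c2 : ℂ} (h1 : c1 * X = 0) (h2 : c2 * X = 0) (hd : c2 - c1 ≠ 0) : X = 0 := by
  by_contra hX
  have e1 := (mul_eq_zero.mp h1).resolve_right hX
  have e2 := (mul_eq_zero.mp h2).resolve_right hX
  exact hd (by linear_combination e2 - e1)

lemma exists_split (n : ℤ) : ∃ m' n' : ℤ, m' + n' = n ∧ m' ≠ 0 ∧ n' ≠ 0 ∧ m' ≠ n' := by
  by_cases h : n = -1 ∨ n = -2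
  · exact ⟨1, n - 1, by omega, by omega, by omega, by omega⟩
  · exact ⟨-1, n + 1, by omega, by omega, by omega, by omega⟩

lemma homogKill (c0 c1 d0 d1 : ℂ) (hcd : c1 ≠ 1 ∨ d1 ≠ -1) (X : ℤ → ℤ → ℂ)
    (hrel : ∀ m n q : ℤ, 2*(c0 + (n:ℂ) + c1*(m:ℂ)) * X (m+n) q
      = (d0 + (q:ℂ) + d1*(m:ℂ)) * X n (q-m)) :
    ∀ n q, X n q = 0 := by
  have hloc : ∀ n q : ℤ, (2*c0 + 2*(n:ℂ) - d0 - (q:ℂ)) * X n q = 0 := by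
    intro n q
    have h := hrel 0 n q
    rw [zero_add, sub_zero] at h
    push_cast at h
    linear_combination h
  intro k p
  by_cases hres : 2*c0 + 2*(k:ℂ) - d0 - (p:ℂ) = 0
  · rcases hcd with hc | hd
    · -- branch B : use relation with target on LHS
      have key : ∀ m : ℤ, m ≠ 0 → (c0 + (k:ℂ) + (c1-1)*(m:ℂ)) * X k p = 0 := by
        intro m hm
        have h := hrel m (k-m) p
        rw [show m+(k-m) = k by ring] at h
        have hz : X (k-m) (p-m) = 0 := by
          have hl := hloc (k-m) (p-m)
          have hco : 2*c0 + 2*((k-m:ℤ):ℂ) - d0 - ((p-m:ℤ):ℂ) = -(m:ℂ) := by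
            push_cast; linear_combination hres
          rw [hco] at hl
          have hmne : -(m:ℂ) ≠ 0 := by
            simpa using (Int.cast_ne_zero (α := ℂ)).mpr hm
          exact (mul_eq_zero.mp hl).resolve_left hmne
        rw [hz, mul_zero] at h
        push_cast at h
        linear_combination h / 2
      refine two_kill (key 1 one_ne_zero) (key 2 two_ne_zero) ?_
      intro h
      apply hc
      push_cast at h
      linear_combination h
    · -- branch A : use relation with target on RHS
      have key : ∀ m : ℤ, m ≠ 0 → (d0 + (p:ℂ) + (1+d1)*(m:ℂ)) * X k p = 0 := by
        intro m hm
        have h := hrel m k (p+m)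
        rw [show p+m-m = p by ring] at h
        have hz : X (m+k) (p+m) = 0 := by
          have hl := hloc (m+k) (p+m)
          have hco : 2*c0 + 2*((m+k:ℤ):ℂ) - d0 - ((p+m:ℤ):ℂ) = (m:ℂ) := by
            push_cast; linear_combination hres
          rw [hco] at hl
          exact (mul_eq_zero.mp hl).resolve_left ((Int.cast_ne_zero (α := ℂ)).mpr hm)
        rw [hz, mul_zero, zero_eq_mul] at h
        rcases h with h | h
        · have hc0 : d0 + (p:ℂ) + (1+d1)*(m:ℂ) = 0 := by push_cast at h ⊢; linear_combination h
          rw [hc0, zero_mul]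
        · rw [h, mul_zero]
      refine two_kill (key 1 one_ne_zero) (key 2 two_ne_zero) ?_
      intro h
      apply hd
      push_cast at h
      linear_combination h
  · exact (mul_eq_zero.mp (hloc k p)).resolve_left hres

lemma genG (β δ : ℂ) (hβ : β ≠ -1) (G : ℤ → ℤ → ℂ)
    (hrel : ∀ m n q : ℤ, 2*((n:ℂ)-(m:ℂ)) * G (m+n) q
      = -(((q:ℂ)-(n:ℂ)) + β*(n:ℂ) + δ) * G m (q-n) + (((q:ℂ)-(m:ℂ)) + β*(m:ℂ) + δ) * G n (q-m)) :
    ∀ n q, G n q = 0 := by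
  have hb1 : (1:ℂ) + β ≠ 0 := fun h => hβ (by linear_combination h)
  have hstar : ∀ n q : ℤ, ((q:ℂ) + δ - 2*(n:ℂ)) * G n q
      = ((q:ℂ) + (β-1)*(n:ℂ) + δ) * G 0 (q-n) := by
    intro n q
    have h := hrel 0 n q
    rw [zero_add, sub_zero] at h
    push_cast at h
    linear_combination -h
  have hGamma : ∀ p : ℤ, G 0 p = 0 := by
    intro p
    by_cases hcase : β = 0 ∧ (p:ℂ) + δ = 0
    · obtain ⟨hβ0, hx⟩ := hcase
      have h1 : G (-1) (p + -1) = 0 := by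
        have hs := hstar (-1) (p + -1)
        have hco : ((p + -1 : ℤ):ℂ) + δ - 2*((-1:ℤ):ℂ) = 1 := by
          push_cast; linear_combination hx
        rw [hco, one_mul] at hs
        have hz : ((p + -1 : ℤ):ℂ) + (β-1)*((-1:ℤ):ℂ) + δ = 0 := by
          push_cast; linear_combination hx - hβ0
        rw [hz, zero_mul] at hs; exact hs
      have h2 : G 1 (p + 1) = 0 := by
        have hs := hstar 1 (p + 1)
        have hco : ((p + 1 : ℤ):ℂ) + δ - 2*((1:ℤ):ℂ) = -1 := by
          push_cast; linear_combination hx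
        have hz : ((p + 1 : ℤ):ℂ) + (β-1)*((1:ℤ):ℂ) + δ = 0 := by
          push_cast; linear_combination hx + hβ0
        rw [hco, hz, zero_mul] at hs
        have : -1 * G 1 (p+1) = 0 := hs
        simpa using this
      have h := hrel (-1) 1 p
      rw [show (-1:ℤ)+1 = 0 by ring] at h
      rw [show p - 1 = p + -1 by ring, show p - -1 = p + 1 by ring] at h
      rw [h1, h2, mul_zero, mul_zero] at h
      have h4 : (4:ℂ) * G 0 p = 0 := by push_cast at h; linear_combination h
      have : (4:ℂ) ≠ 0 := by norm_num
      exact (mul_eq_zero.mp h4).resolve_left this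
    · by_contra hG
      -- derive polynomial identity
      have hP : ∀ m n : ℤ,
          (2*((n:ℂ)-m)*(((p:ℂ)+δ)-m)*(((p:ℂ)+δ)-n)*(((p:ℂ)+δ)+β*((m:ℂ)+n))
            + (((p:ℂ)+δ)+m+β*n)*(((p:ℂ)+δ)-n)*(((p:ℂ)+δ)-m-n)*(((p:ℂ)+δ)+β*m)
            - (((p:ℂ)+δ)+n+β*m)*(((p:ℂ)+δ)-m)*(((p:ℂ)+δ)-m-n)*(((p:ℂ)+δ)+β*n))
            * G 0 p = 0 := by
        intro m n
        have h0 := hrel m n (p+m+n)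
        rw [show p+m+n-n = p+m by ring, show p+m+n-m = p+n by ring] at h0
        have s1 := hstar n (p+n)
        rw [show p+n-n = p by ring] at s1
        have s2 := hstar m (p+m)
        rw [show p+m-m = p by ring] at s2
        have s3 := hstar (m+n) (p+m+n)
        rw [show p+m+n-(m+n) = p by ring] at s3
        push_cast at h0 s1 s2 s3
        set x := (p:ℂ) + δ with hxdef
        linear_combination ((x-(m:ℂ))*(x-(n:ℂ))*(x-(m:ℂ)-(n:ℂ)))*h0
          - (2*((n:ℂ)-(m:ℂ))*(x-(m:ℂ))*(x-(n:ℂ)))*s3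
          - ((x+(m:ℂ)+β*(n:ℂ))*(x-(n:ℂ))*(x-(m:ℂ)-(n:ℂ)))*s2
          + ((x+(n:ℂ)+β*(m:ℂ))*(x-(m:ℂ))*(x-(m:ℂ)-(n:ℂ)))*s1
      have e1 := hP 1 2
      have e2 := hP 1 3
      push_cast at e1 e2
      -- e1 : 2(1+β)(3β + x(2-β)) * Γ = 0 ; e2 : 6(1+β)(4β + x(2-β)) * Γ = 0
      have k1 : (2*((1:ℂ)+β)) * ((3*β + ((p:ℂ)+δ)*(2-β)) * G 0 p) = 0 := by linear_combination e1
      have k2 : (6*((1:ℂ)+β)) * ((4*β + ((p:ℂ)+δ)*(2-β)) * G 0 p) = 0 := by linear_combination e2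
      have hb2 : (2*((1:ℂ)+β)) ≠ 0 := by
        simpa using hb1
      have hb6 : (6*((1:ℂ)+β)) ≠ 0 := by
        intro h; rcases mul_eq_zero.mp h with h | h
        · norm_num at h
        · exact hb1 h
      have k1' := (mul_eq_zero.mp k1).resolve_left hb2
      have k2' := (mul_eq_zero.mp k2).resolve_left hb6
      have k1'' := (mul_eq_zero.mp k1').resolve_right hG
      have k2'' := (mul_eq_zero.mp k2').resolve_right hG
      have hβ0 : β = 0 := by linear_combination k2'' - k1''
      have hx0 : (p:ℂ) + δ = 0 := by
        have : ((p:ℂ)+δ)*2 = 0 := by linear_combination k1'' - 3*hβ0 + ((p:ℂ)+δ)*hβ0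
        have h2 : (2:ℂ) ≠ 0 := by norm_num
        exact (mul_eq_zero.mp this).resolve_right h2
      exact hcase ⟨hβ0, hx0⟩
  have hloc : ∀ n q : ℤ, ((q:ℂ) + δ - 2*(n:ℂ)) * G n q = 0 := by
    intro n q
    have := hstar n q
    rw [hGamma] at this
    rw [this, mul_zero]
  intro n q
  by_cases hres : (q:ℂ) + δ - 2*(n:ℂ) = 0
  · obtain ⟨m', n', hsum, hm0, hn0, hne⟩ := exists_split n
    have h := hrel m' n' q
    rw [hsum] at h
    have hz1 : G m' (q - n') = 0 := by
      have hl := hloc m' (q - n')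
      have hco : ((q - n' : ℤ):ℂ) + δ - 2*((m':ℤ):ℂ) = (n':ℂ) := by
        have hmnC : (m':ℂ) + (n':ℂ) = (n:ℂ) := by exact_mod_cast congrArg (Int.cast : ℤ → ℂ) hsum
        push_cast; linear_combination hres - 2*hmnC
      rw [hco] at hl
      exact (mul_eq_zero.mp hl).resolve_left ((Int.cast_ne_zero (α := ℂ)).mpr hn0)
    have hz2 : G n' (q - m') = 0 := by
      have hl := hloc n' (q - m')
      have hco : ((q - m' : ℤ):ℂ) + δ - 2*((n':ℤ):ℂ) = (m':ℂ) := by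
        have hmnC : (m':ℂ) + (n':ℂ) = (n:ℂ) := by exact_mod_cast congrArg (Int.cast : ℤ → ℂ) hsum
        push_cast; linear_combination hres - 2*hmnC
      rw [hco] at hl
      exact (mul_eq_zero.mp hl).resolve_left ((Int.cast_ne_zero (α := ℂ)).mpr hm0)
    rw [hz1, hz2, mul_zero, mul_zero] at h
    have hco : (2*((n':ℂ)-(m':ℂ))) ≠ 0 := by
      intro hcc
      apply hne
      have : (n':ℂ) = (m':ℂ) := by linear_combination hcc / 2
      exact_mod_cast this.symm
    have : 2*((n':ℂ)-(m':ℂ)) * G n q = 0 := by linear_combination h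
    exact (mul_eq_zero.mp this).resolve_left hco
  · exact (mul_eq_zero.mp (hloc n q)).resolve_left hres

lemma brk_Lb_Lb (a b : ℂ) (m n : ℤ) :
    swBracket a b (Lb m) (Lb n) = ((n:ℂ)-(m:ℂ)) • Lb (m+n) := by
  rw [show Lb m = Finsupp.single (SWBasis.L m) (1:ℂ) from rfl,
     show Lb n = Finsupp.single (SWBasis.L n) (1:ℂ) from rfl, swBracket_single_single]
  simp [swBracketBasis]

lemma brk_Lb_Ib (a b : ℂ) (m n : ℤ) :
    swBracket a b (Lb m) (Ib n) = ((n:ℂ)+b*(m:ℂ)+a) • Ib (m+n) := by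
  rw [show Lb m = Finsupp.single (SWBasis.L m) (1:ℂ) from rfl,
     show Ib n = Finsupp.single (SWBasis.I n) (1:ℂ) from rfl, swBracket_single_single]
  simp [swBracketBasis]

lemma brk_Lb_Yb (a b : ℂ) (m n : ℤ) :
    swBracket a b (Lb m) (Yb n) = ((n:ℂ)+1/2+((b-1)*(m:ℂ)+a)/2) • Yb (m+n) := by
  rw [show Lb m = Finsupp.single (SWBasis.L m) (1:ℂ) from rfl,
     show Yb n = Finsupp.single (SWBasis.Y n) (1:ℂ) from rfl, swBracket_single_single]
  simp [swBracketBasis]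

lemma brk_Yb_Yb (a b : ℂ) (m n : ℤ) :
    swBracket a b (Yb m) (Yb n) = ((n:ℂ)-(m:ℂ)) • Ib (m+n+1) := by
  rw [show Yb m = Finsupp.single (SWBasis.Y m) (1:ℂ) from rfl,
     show Yb n = Finsupp.single (SWBasis.Y n) (1:ℂ) from rfl, swBracket_single_single]
  simp [swBracketBasis]

lemma brk_Ib_Yb (a b : ℂ) (m n : ℤ) :
    swBracket a b (Ib m) (Yb n) = 0 := by
  rw [show Ib m = Finsupp.single (SWBasis.I m) (1:ℂ) from rfl,
     show Yb n = Finsupp.single (SWBasis.Y n) (1:ℂ) from rfl, swBracket_single_single]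
  simp [swBracketBasis]

section eqs
variable {a b : ℂ} {φ : SW →ₗ[ℂ] SW}

lemma eqA1 (hφ : IsHalfDerivationSW a b φ) (m n q : ℤ) :
    ((n:ℂ)-(m:ℂ)) * φ (Lb (m+n)) (SWBasis.L q)
      = (1/2) * ((2*(n:ℂ)-(q:ℂ)) * φ (Lb m) (SWBasis.L (q-n))
               + ((q:ℂ)-2*(m:ℂ)) * φ (Lb n) (SWBasis.L (q-m))) := by
  have h := hφ (Lb m) (Lb n)
  rw [brk_Lb_Lb, map_smul] at h
  have h2 := congrArg (fun v : SW => v (SWBasis.L q)) h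
  simpa [Finsupp.smul_apply, Finsupp.add_apply, brkR_LL, brkL_LL, smul_eq_mul, mul_add] using h2

lemma eqA2 (hφ : IsHalfDerivationSW a b φ) (m n q : ℤ) :
    ((n:ℂ)-(m:ℂ)) * φ (Lb (m+n)) (SWBasis.I q)
      = (1/2) * (-((q:ℂ)-(n:ℂ)+b*(n:ℂ)+a) * φ (Lb m) (SWBasis.I (q-n))
               + ((q:ℂ)-(m:ℂ)+b*(m:ℂ)+a) * φ (Lb n) (SWBasis.I (q-m))) := by
  have h := hφ (Lb m) (Lb n)
  rw [brk_Lb_Lb, map_smul] at h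
  have h2 := congrArg (fun v : SW => v (SWBasis.I q)) h
  simpa [Finsupp.smul_apply, Finsupp.add_apply, brkR_LI, brkL_LI, smul_eq_mul, mul_add] using h2

lemma eqA3 (hφ : IsHalfDerivationSW a b φ) (m n q : ℤ) :
    ((n:ℂ)-(m:ℂ)) * φ (Lb (m+n)) (SWBasis.Y q)
      = (1/2) * (-((q:ℂ)-(n:ℂ)+1/2+((b-1)*(n:ℂ)+a)/2) * φ (Lb m) (SWBasis.Y (q-n))
               + ((q:ℂ)-(m:ℂ)+1/2+((b-1)*(m:ℂ)+a)/2) * φ (Lb n) (SWBasis.Y (q-m))) := by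
  have h := hφ (Lb m) (Lb n)
  rw [brk_Lb_Lb, map_smul] at h
  have h2 := congrArg (fun v : SW => v (SWBasis.Y q)) h
  simpa [Finsupp.smul_apply, Finsupp.add_apply, brkR_LY, brkL_LY, smul_eq_mul, mul_add] using h2

lemma eqB2 (hφ : IsHalfDerivationSW a b φ) (m n q : ℤ) :
    ((n:ℂ)+b*(m:ℂ)+a) * φ (Ib (m+n)) (SWBasis.I q)
      = (1/2) * (((n:ℂ)+b*((q:ℂ)-(n:ℂ))+a) * φ (Lb m) (SWBasis.L (q-n))
               + ((q:ℂ)-(m:ℂ)+b*(m:ℂ)+a) * φ (Ib n) (SWBasis.I (q-m))) := by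
  have h := hφ (Lb m) (Ib n)
  rw [brk_Lb_Ib, map_smul] at h
  have h2 := congrArg (fun v : SW => v (SWBasis.I q)) h
  simpa [Finsupp.smul_apply, Finsupp.add_apply, brkR_II, brkL_LI, smul_eq_mul, mul_add] using h2

lemma eqC1 (hφ : IsHalfDerivationSW a b φ) (m n q : ℤ) :
    ((n:ℂ)+1/2+((b-1)*(m:ℂ)+a)/2) * φ (Yb (m+n)) (SWBasis.L q)
      = (1/2) * (((q:ℂ)-2*(m:ℂ)) * φ (Yb n) (SWBasis.L (q-m))) := by
  have h := hφ (Lb m) (Yb n)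
  rw [brk_Lb_Yb, map_smul] at h
  have h2 := congrArg (fun v : SW => v (SWBasis.L q)) h
  simpa [Finsupp.smul_apply, Finsupp.add_apply, brkR_YL, brkL_LL, smul_eq_mul, mul_add] using h2

lemma eqC2 (hφ : IsHalfDerivationSW a b φ) (m n q : ℤ) :
    ((n:ℂ)+1/2+((b-1)*(m:ℂ)+a)/2) * φ (Yb (m+n)) (SWBasis.I q)
      = (1/2) * ((2*(n:ℂ)+1-(q:ℂ)) * φ (Lb m) (SWBasis.Y (q-n-1))
               + ((q:ℂ)-(m:ℂ)+b*(m:ℂ)+a) * φ (Yb n) (SWBasis.I (q-m))) := by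
  have h := hφ (Lb m) (Yb n)
  rw [brk_Lb_Yb, map_smul] at h
  have h2 := congrArg (fun v : SW => v (SWBasis.I q)) h
  simpa [Finsupp.smul_apply, Finsupp.add_apply, brkR_YI, brkL_LI, smul_eq_mul, mul_add] using h2

lemma eqC3 (hφ : IsHalfDerivationSW a b φ) (m n q : ℤ) :
    ((n:ℂ)+1/2+((b-1)*(m:ℂ)+a)/2) * φ (Yb (m+n)) (SWBasis.Y q)
      = (1/2) * (((n:ℂ)+1/2+((b-1)*((q:ℂ)-(n:ℂ))+a)/2) * φ (Lb m) (SWBasis.L (q-n))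
               + ((q:ℂ)-(m:ℂ)+1/2+((b-1)*(m:ℂ)+a)/2) * φ (Yb n) (SWBasis.Y (q-m))) := by
  have h := hφ (Lb m) (Yb n)
  rw [brk_Lb_Yb, map_smul] at h
  have h2 := congrArg (fun v : SW => v (SWBasis.Y q)) h
  simpa [Finsupp.smul_apply, Finsupp.add_apply, brkR_YY, brkL_LY, smul_eq_mul, mul_add] using h2

lemma eqDL (hφ : IsHalfDerivationSW a b φ) (m n q : ℤ) :
    ((n:ℂ)-(m:ℂ)) * φ (Ib (m+n+1)) (SWBasis.L q) = 0 := by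
  have h := hφ (Yb m) (Yb n)
  rw [brk_Yb_Yb, map_smul] at h
  have h2 := congrArg (fun v : SW => v (SWBasis.L q)) h
  simpa [Finsupp.smul_apply, Finsupp.add_apply, brkR_YL, brkL_YL, smul_eq_mul] using h2

lemma eqE11 (hφ : IsHalfDerivationSW a b φ) (m n q : ℤ) :
    0 = (1/2) * ((2*(n:ℂ)+1-(q:ℂ)) * φ (Ib m) (SWBasis.Y (q-n-1))
               + (-((m:ℂ)+b*((q:ℂ)-(m:ℂ))+a)) * φ (Yb n) (SWBasis.L (q-m))) := by
  have h := hφ (Ib m) (Yb n)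
  rw [brk_Ib_Yb, map_zero] at h
  have h2 := congrArg (fun v : SW => v (SWBasis.I q)) h
  simpa [Finsupp.smul_apply, Finsupp.add_apply, brkR_YI, brkL_II, smul_eq_mul, mul_add] using h2

end eqs

lemma half_deriv_scalar (a b : ℂ) (hb : b ≠ -1) (φ : SW →ₗ[ℂ] SW)
    (hφ : IsHalfDerivationSW a b φ) :
    ∀ x : SW, φ x = (φ (Lb 0) (SWBasis.L 0)) • x := by
  -- r ≡ 0
  have hR : ∀ n q : ℤ, φ (Ib n) (SWBasis.L q) = 0 := by
    intro k q
    obtain ⟨m', n', hsum, hm0, hn0, hne⟩ := exists_split (k-1)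
    have h := eqDL hφ m' n' q
    rw [show m'+n'+1 = k by omega] at h
    have hc : ((n':ℂ)-(m':ℂ)) ≠ 0 := by
      intro hcc
      exact hne (by exact_mod_cast (sub_eq_zero.mp hcc).symm)
    exact (mul_eq_zero.mp h).resolve_left hc
  -- u ≡ 0
  have hU : ∀ n q : ℤ, φ (Yb n) (SWBasis.L q) = 0 := by
    refine homogKill ((1+a)/2) ((b-1)/2) 0 (-2) (Or.inr (by norm_num))
      (fun n q => φ (Yb n) (SWBasis.L q)) ?_
    intro m n q
    have h := eqC1 hφ m n q
    linear_combination 2*h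
  -- t ≡ 0
  have hT : ∀ n q : ℤ, φ (Ib n) (SWBasis.Y q) = 0 := by
    intro k p
    have h := eqE11 hφ k (p+1) (2*p+2)
    rw [show 2*p+2-(p+1)-1 = p by ring, hU (p+1) (2*p+2-k)] at h
    push_cast at h
    linear_combination -2*h
  -- g ≡ 0
  have hG : ∀ n q : ℤ, φ (Lb n) (SWBasis.I q) = 0 := by
    refine genG b a hb (fun n q => φ (Lb n) (SWBasis.I q)) ?_
    intro m n q
    have h := eqA2 hφ m n q
    linear_combination 2*h
  -- h ≡ 0
  have hH : ∀ n q : ℤ, φ (Lb n) (SWBasis.Y q) = 0 := by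
    refine genG ((b-1)/2) ((1+a)/2) (fun h => hb (by linear_combination 2*h))
      (fun n q => φ (Lb n) (SWBasis.Y q)) ?_
    intro m n q
    have h := eqA3 hφ m n q
    linear_combination 2*h
  -- v ≡ 0
  have hV : ∀ n q : ℤ, φ (Yb n) (SWBasis.I q) = 0 := by
    have hcd : (b-1)/2 ≠ 1 ∨ (b-1 : ℂ) ≠ -1 := by
      by_cases h3 : b = 3
      · right; rw [h3]; norm_num
      · left; exact fun h => h3 (by linear_combination 2*h)
    refine homogKill ((1+a)/2) ((b-1)/2) a (b-1) hcd
      (fun n q => φ (Yb n) (SWBasis.I q)) ?_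
    intro m n q
    have h := eqC2 hφ m n q
    rw [hH m (q-n-1)] at h
    linear_combination 2*h
  -- f is a shift of its values on L_0
  have hF : ∀ n q : ℤ, φ (Lb n) (SWBasis.L q) = φ (Lb 0) (SWBasis.L (q-n)) := by
    have hF0 : ∀ n q : ℤ, q ≠ 2*n → φ (Lb n) (SWBasis.L q) = φ (Lb 0) (SWBasis.L (q-n)) := by
      intro n q hq
      have h := eqA1 hφ 0 n q
      rw [zero_add, sub_zero] at h
      have key : (2*(n:ℂ)-(q:ℂ)) * (φ (Lb n) (SWBasis.L q) - φ (Lb 0) (SWBasis.L (q-n))) = 0 := by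
        push_cast at h
        linear_combination 2*h
      have hc : (2*(n:ℂ)-(q:ℂ)) ≠ 0 := by
        intro hcc
        apply hq
        have : ((q:ℤ):ℂ) = ((2*n:ℤ):ℂ) := by push_cast; linear_combination -hcc
        exact_mod_cast this
      exact sub_eq_zero.mp ((mul_eq_zero.mp key).resolve_left hc)
    intro n q
    by_cases hq : q = 2*n
    · subst hq
      obtain ⟨m', n', hsum, hm0, hn0, hne⟩ := exists_split n
      have h := eqA1 hφ m' n' (2*n)
      rw [hsum] at h
      have e1 : φ (Lb m') (SWBasis.L (2*n-n')) = φ (Lb 0) (SWBasis.L n) := by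
        rw [hF0 m' (2*n-n') (by omega), show 2*n-n'-m' = n by omega]
      have e2 : φ (Lb n') (SWBasis.L (2*n-m')) = φ (Lb 0) (SWBasis.L n) := by
        rw [hF0 n' (2*n-m') (by omega), show 2*n-m'-n' = n by omega]
      rw [e1, e2] at h
      have key : ((n':ℂ)-(m':ℂ)) * (φ (Lb n) (SWBasis.L (2*n)) - φ (Lb 0) (SWBasis.L n)) = 0 := by
        push_cast at h
        linear_combination h
      have hc : ((n':ℂ)-(m':ℂ)) ≠ 0 := by
        intro hcc
        exact hne (by exact_mod_cast (sub_eq_zero.mp hcc).symm)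
      have := sub_eq_zero.mp ((mul_eq_zero.mp key).resolve_left hc)
      rw [this, show 2*n-n = n by ring]
    · exact hF0 n q hq
  -- the shift coefficients vanish away from 0
  have halpha : ∀ p : ℤ, p ≠ 0 → φ (Lb 0) (SWBasis.L p) = 0 := by
    intro p hp
    by_contra hα0
    have sstar : ∀ n q : ℤ, (2*(n:ℂ)+a-(q:ℂ)) * φ (Ib n) (SWBasis.I q)
        = ((n:ℂ)+b*((q:ℂ)-(n:ℂ))+a) * φ (Lb 0) (SWBasis.L (q-n)) := by
      intro n q
      have h := eqB2 hφ 0 n q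
      rw [zero_add, sub_zero] at h
      push_cast at h
      linear_combination 2*h
    have hQ : ∀ m n : ℤ, (2*((n:ℂ)+b*(m:ℂ)+a)*((m:ℂ)+(n:ℂ)+b*(p:ℂ)+a)*((n:ℂ)+a-(p:ℂ))
          - ((n:ℂ)+b*((p:ℂ)+(m:ℂ))+a)*((m:ℂ)+(n:ℂ)+a-(p:ℂ))*((n:ℂ)+a-(p:ℂ))
          - ((p:ℂ)+(n:ℂ)+b*(m:ℂ)+a)*((n:ℂ)+b*(p:ℂ)+a)*((m:ℂ)+(n:ℂ)+a-(p:ℂ)))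
          * φ (Lb 0) (SWBasis.L p) = 0 := by
      intro m n
      have h0 := eqB2 hφ m n (p+m+n)
      rw [show p+m+n-n = p+m by ring, show p+m+n-m = p+n by ring,
        hF m (p+m), show p+m-m = p by ring] at h0
      have s1 := sstar n (p+n)
      rw [show p+n-n = p by ring] at s1
      have s3 := sstar (m+n) (p+m+n)
      rw [show p+m+n-(m+n) = p by ring] at s3
      push_cast at h0 s1 s3
      linear_combination (((n:ℂ)+a-(p:ℂ))*((m:ℂ)+(n:ℂ)+a-(p:ℂ)))*(2*h0)
        - (2*((n:ℂ)+b*(m:ℂ)+a)*((n:ℂ)+a-(p:ℂ)))*s3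
        + (((p:ℂ)+(n:ℂ)+b*(m:ℂ)+a)*((m:ℂ)+(n:ℂ)+a-(p:ℂ)))*s1
    have E1 := hQ 1 0
    have E2 := hQ 1 1
    have E3 := hQ 2 0
    push_cast at E1 E2 E3
    have h12 : (((1:ℂ)+b)*(p:ℂ)*(2-b)) * φ (Lb 0) (SWBasis.L p) = 0 := by
      linear_combination E1 - E2
    have h13 : (((1:ℂ)+b)*(p:ℂ)*b) * φ (Lb 0) (SWBasis.L p) = 0 := by
      linear_combination E1 - (1/2)*E3
    have q12 := (mul_eq_zero.mp h12).resolve_right hα0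
    have q13 := (mul_eq_zero.mp h13).resolve_right hα0
    have hbne : (1:ℂ)+b ≠ 0 := fun h => hb (by linear_combination h)
    have h2 : ((1:ℂ)+b)*(p:ℂ)*2 = 0 := by linear_combination q12 + q13
    have hpc : (p:ℂ) = 0 := by
      rcases mul_eq_zero.mp h2 with h | h
      · rcases mul_eq_zero.mp h with h' | h'
        · exact absurd h' hbne
        · exact h'
      · norm_num at h
    exact hp (by exact_mod_cast hpc)
  -- final form of f
  have hFf : ∀ n q : ℤ, φ (Lb n) (SWBasis.L q)
      = (if q = n then φ (Lb 0) (SWBasis.L 0) else 0) := by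
    intro n q
    rw [hF n q]
    by_cases h : q = n
    · rw [if_pos h, show q-n = 0 by omega]
    · rw [if_neg h]
      exact halpha (q-n) (by omega)
  -- s
  have hS : ∀ n q : ℤ, φ (Ib n) (SWBasis.I q)
      = (if q = n then φ (Lb 0) (SWBasis.L 0) else 0) := by
    have hcd : b ≠ 1 ∨ (b-1 : ℂ) ≠ -1 := by
      by_cases h0 : b = 0
      · left; rw [h0]; norm_num
      · right; exact fun h => h0 (by linear_combination h)
    have key := homogKill a b a (b-1) hcd
      (fun n q => φ (Ib n) (SWBasis.I q) - (if q = n then φ (Lb 0) (SWBasis.L 0) else 0)) ?_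
    · intro n q
      have h := key n q
      exact sub_eq_zero.mp h
    · intro m n q
      have h := eqB2 hφ m n q
      rw [hFf m (q-n)] at h
      by_cases hc : q = m+n
      · rw [if_pos (show q-n = m by omega)] at h
        rw [if_pos hc, if_pos (show q-m = n by omega)]
        have hcC : (q:ℂ) = (m:ℂ)+(n:ℂ) := by exact_mod_cast congrArg (Int.cast : ℤ → ℂ) hc
        linear_combination 2*h + ((1+b)*(φ (Lb 0) (SWBasis.L 0)))*hcC
      · rw [if_neg (show ¬(q-n = m) by omega)] at h
        rw [if_neg hc, if_neg (show ¬(q-m = n) by omega)]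
        linear_combination 2*h
  -- w
  have hW : ∀ n q : ℤ, φ (Yb n) (SWBasis.Y q)
      = (if q = n then φ (Lb 0) (SWBasis.L 0) else 0) := by
    have hcd : (b-1)/2 ≠ 1 ∨ ((b-3)/2 : ℂ) ≠ -1 := by
      by_cases h3 : b = 3
      · right; rw [h3]; norm_num
      · left; exact fun h => h3 (by linear_combination 2*h)
    have key := homogKill ((1+a)/2) ((b-1)/2) ((1+a)/2) ((b-3)/2) hcd
      (fun n q => φ (Yb n) (SWBasis.Y q) - (if q = n then φ (Lb 0) (SWBasis.L 0) else 0)) ?_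
    · intro n q
      exact sub_eq_zero.mp (key n q)
    · intro m n q
      have h := eqC3 hφ m n q
      rw [hFf m (q-n)] at h
      by_cases hc : q = m+n
      · rw [if_pos (show q-n = m by omega)] at h
        rw [if_pos hc, if_pos (show q-m = n by omega)]
        have hcC : (q:ℂ) = (m:ℂ)+(n:ℂ) := by exact_mod_cast congrArg (Int.cast : ℤ → ℂ) hc
        linear_combination 2*h + (((b+1)/2)*(φ (Lb 0) (SWBasis.L 0)))*hcC
      · rw [if_neg (show ¬(q-n = m) by omega)] at h
        rw [if_neg hc, if_neg (show ¬(q-m = n) by omega)]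
        linear_combination 2*h
  -- values on basis vectors
  have hLv : ∀ n : ℤ, φ (Lb n) = (φ (Lb 0) (SWBasis.L 0)) • Lb n := by
    intro n
    ext pt
    rw [Finsupp.smul_apply]
    cases pt with
    | L q =>
      rw [hFf n q, show (Lb n) (SWBasis.L q) = (if q = n then (1:ℂ) else 0) by
        rw [show Lb n = Finsupp.single (SWBasis.L n) (1:ℂ) from rfl, Finsupp.single_apply]
        simp [eq_comm]]
      by_cases h : q = n <;> simp [h]
    | I q => rw [hG n q]; simp [Lb, Finsupp.single_apply]
    | Y q => rw [hH n q]; simp [Lb, Finsupp.single_apply]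
  have hIv : ∀ n : ℤ, φ (Ib n) = (φ (Lb 0) (SWBasis.L 0)) • Ib n := by
    intro n
    ext pt
    rw [Finsupp.smul_apply]
    cases pt with
    | L q => rw [hR n q]; simp [Ib, Finsupp.single_apply]
    | I q =>
      rw [hS n q, show (Ib n) (SWBasis.I q) = (if q = n then (1:ℂ) else 0) by
        rw [show Ib n = Finsupp.single (SWBasis.I n) (1:ℂ) from rfl, Finsupp.single_apply]
        simp [eq_comm]]
      by_cases h : q = n <;> simp [h]
    | Y q => rw [hT n q]; simp [Ib, Finsupp.single_apply]
  have hYv : ∀ n : ℤ, φ (Yb n) = (φ (Lb 0) (SWBasis.L 0)) • Yb n := by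
    intro n
    ext pt
    rw [Finsupp.smul_apply]
    cases pt with
    | L q => rw [hU n q]; simp [Yb, Finsupp.single_apply]
    | I q => rw [hV n q]; simp [Yb, Finsupp.single_apply]
    | Y q =>
      rw [hW n q, show (Yb n) (SWBasis.Y q) = (if q = n then (1:ℂ) else 0) by
        rw [show Yb n = Finsupp.single (SWBasis.Y n) (1:ℂ) from rfl, Finsupp.single_apply]
        simp [eq_comm]]
      by_cases h : q = n <;> simp [h]
  -- conclude
  intro x
  induction x using Finsupp.induction_linear with
  | zero => simp
  | add f g hf hg => rw [map_add, hf, hg, smul_add]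
  | single e c =>
    have hs : (Finsupp.single e c : SW) = c • Finsupp.single e 1 := by
      rw [Finsupp.smul_single, smul_eq_mul, mul_one]
    rw [hs, map_smul]
    cases e with
    | L n =>
      rw [show Finsupp.single (SWBasis.L n) (1:ℂ) = Lb n from rfl, hLv, smul_comm]
    | I n =>
      rw [show Finsupp.single (SWBasis.I n) (1:ℂ) = Ib n from rfl, hIv, smul_comm]
    | Y n =>
      rw [show Finsupp.single (SWBasis.Y n) (1:ℂ) = Yb n from rfl, hYv, smul_comm]

/-- for b ≠ −1, 𝒲(a,b,1/2) admits no nontrivial transposed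
Poisson structure: every compatible commutative associative multiplication is zero. -/
theorem stmt8 (a b : ℂ) (hb : b ≠ -1) (mul : SW →ₗ[ℂ] SW →ₗ[ℂ] SW)
    (hcomm : ∀ x y : SW, mul x y = mul y x)
    (hassoc : ∀ x y z : SW, mul (mul x y) z = mul x (mul y z))
    (hcompat : ∀ x y z : SW,
      (2 : ℂ) • mul z (swBracket a b x y) =
        swBracket a b (mul z x) y + swBracket a b x (mul z y)) :
    mul = 0 := by
  have key : ∀ z : SW, ∀ x : SW, mul z x = (mul z (Lb 0) (SWBasis.L 0)) • x := by
    intro z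
    apply half_deriv_scalar a b hb (mul z)
    intro x y
    have h := hcompat x y z
    rw [← h, smul_smul]
    norm_num
  -- lam (Lb 0) = 0
  have hL0 : mul (Lb 0) = 0 := by
    have h1 : mul (Lb 0) (Ib 0) = (mul (Lb 0) (Lb 0) (SWBasis.L 0)) • Ib 0 := key (Lb 0) (Ib 0)
    have h2 : mul (Ib 0) (Lb 0) = (mul (Ib 0) (Lb 0) (SWBasis.L 0)) • Lb 0 := key (Ib 0) (Lb 0)
    have h3 : mul (Lb 0) (Ib 0) = mul (Ib 0) (Lb 0) := hcomm _ _
    have h4 := congrArg (fun v : SW => v (SWBasis.I 0)) (h1.symm.trans (h3.trans h2))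
    simp only [Finsupp.smul_apply, smul_eq_mul] at h4
    -- (Ib 0) (I 0) = 1, (Lb 0) (I 0) = 0
    rw [show (Ib 0) (SWBasis.I 0) = (1:ℂ) from by simp [Ib],
      show (Lb 0) (SWBasis.I 0) = (0:ℂ) from by simp [Lb, Finsupp.single_apply]] at h4
    have hc : mul (Lb 0) (Lb 0) (SWBasis.L 0) = 0 := by
      rw [mul_one, mul_zero] at h4
      exact h4
    apply LinearMap.ext
    intro x
    rw [key (Lb 0) x, hc, zero_smul]
    simp
  have hz : ∀ z : SW, mul z = 0 := by
    intro z
    have h1 : mul z (Lb 0) = (mul z (Lb 0) (SWBasis.L 0)) • Lb 0 := key z (Lb 0)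
    have h2 : mul z (Lb 0) = 0 := by
      rw [hcomm z (Lb 0), hL0]
      rfl
    have h3 := congrArg (fun v : SW => v (SWBasis.L 0)) (h2.symm.trans h1)
    simp only [Finsupp.smul_apply, smul_eq_mul] at h3
    rw [show (Lb 0) (SWBasis.L 0) = (1:ℂ) from by simp [Lb]] at h3
    have hc : mul z (Lb 0) (SWBasis.L 0) = 0 := by
      rw [mul_one] at h3
      exact h3.symm
    apply LinearMap.ext
    intro x
    rw [key z x, hc, zero_smul]
    simp
  apply LinearMap.ext
  intro z
  rw [hz z]
  simp
end

section
/- Let n ∈ ℤ and let G be a nontrivial additive subgroup of ℂ. Let ∗ denote the commutative associative multiplication on the underlying vector space of W_n(G) determined on basis elements by L_{α,i} ∗ L_{β,j} = L_{α+β, i+j} (i.e., the group algebra ℂ[G × ℤ]). Then for every element w of this space, the product x·y := (x ∗ w) ∗ y is commutative and associative and satisfies the transposed Poisson compatibility 2·(z·[x,y]) = [z·x, y] + [x, z·y] with respect to the Lie bracket of W_n(G); that is, every such mutation defines a transposed Poisson structure on W_n(G). -/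
/-- Underlying vector space of the not-finitely graded Witt algebra W_n(G):
the free ℂ-module on the basis {L_{α,i} : α ∈ G, i ∈ ℤ}. -/
abbrev WnG (G : AddSubgroup ℂ) : Type := (↥G × ℤ) →₀ ℂ

/-- The basis element L_{α,i} of W_n(G). -/
noncomputable def Lw (G : AddSubgroup ℂ) (α : ↥G) (i : ℤ) : WnG G :=
  Finsupp.single (α, i) 1

/-- The Lie bracket of W_n(G) on basis elements:
[L_{α,i}, L_{β,j}] = (β−α)·L_{α+β,i+j} + (j−i)·L_{α+β,i+j+n}. -/
noncomputable def wBracketBasis (n : ℤ) (G : AddSubgroup ℂ) (p q : ↥G × ℤ) : WnG G :=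
  ((q.1 : ℂ) - (p.1 : ℂ)) • Lw G (p.1 + q.1) (p.2 + q.2) +
    ((q.2 : ℂ) - (p.2 : ℂ)) • Lw G (p.1 + q.1) (p.2 + q.2 + n)

/-- The Lie bracket of W_n(G), extended bilinearly from the basis. -/
noncomputable def wBracket (n : ℤ) (G : AddSubgroup ℂ) :
    WnG G →ₗ[ℂ] WnG G →ₗ[ℂ] WnG G :=
  Finsupp.lift (WnG G →ₗ[ℂ] WnG G) ℂ (↥G × ℤ) fun p =>
    Finsupp.lift (WnG G) ℂ (↥G × ℤ) fun q => wBracketBasis n G p q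

/-- `φ` is a ½-derivation of W_n(G). -/
def IsHalfDerivationW (n : ℤ) (G : AddSubgroup ℂ) (φ : WnG G →ₗ[ℂ] WnG G) : Prop :=
  ∀ x y : WnG G, φ (wBracket n G x y) =
    (1 / 2 : ℂ) • (wBracket n G (φ x) y + wBracket n G x (φ y))

/-- The commutative associative multiplication ∗ on the underlying space of
W_n(G) (the group algebra ℂ[G × ℤ]): L_{α,i} ∗ L_{β,j} = L_{α+β,i+j},
extended bilinearly. -/
noncomputable def wStar (G : AddSubgroup ℂ) : WnG G →ₗ[ℂ] WnG G →ₗ[ℂ] WnG G :=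
  Finsupp.lift (WnG G →ₗ[ℂ] WnG G) ℂ (↥G × ℤ) fun p =>
    Finsupp.lift (WnG G) ℂ (↥G × ℤ) fun q => Lw G (p.1 + q.1) (p.2 + q.2)

lemma wStar_single (G : AddSubgroup ℂ) (p q : ↥G × ℤ) (a b : ℂ) :
    wStar G (Finsupp.single p a) (Finsupp.single q b) =
      Finsupp.single (p + q) (a * b) := by
  simp [wStar, Lw, Finsupp.lift_apply, Finsupp.sum_single_index, Finsupp.smul_single,
    smul_smul]
  rfl

lemma wBracket_single (n : ℤ) (G : AddSubgroup ℂ) (p q : ↥G × ℤ) (a b : ℂ) :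
    wBracket n G (Finsupp.single p a) (Finsupp.single q b) =
      (a * b) • wBracketBasis n G p q := by
  simp [wBracket, Finsupp.lift_apply, Finsupp.sum_single_index, smul_smul]

lemma wStar_comm (G : AddSubgroup ℂ) (x y : WnG G) :
    wStar G x y = wStar G y x := by
  induction x using Finsupp.induction_linear with
  | zero => simp
  | add a b ha hb => simp [map_add, ha, hb]
  | single p a =>
    induction y using Finsupp.induction_linear with
    | zero => simp
    | add c d hc hd => simp [map_add, hc, hd]
    | single q b => rw [wStar_single, wStar_single, add_comm, mul_comm]

lemma wStar_assoc (G : AddSubgroup ℂ) (x y z : WnG G) :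
    wStar G (wStar G x y) z = wStar G x (wStar G y z) := by
  induction x using Finsupp.induction_linear with
  | zero => simp
  | add a b ha hb => simp [map_add, ha, hb]
  | single p a =>
    induction y using Finsupp.induction_linear with
    | zero => simp
    | add c d hc hd => simp [map_add, hc, hd]
    | single q b =>
      induction z using Finsupp.induction_linear with
      | zero => simp
      | add e f he hf => simp [map_add, he, hf]
      | single r c =>
        rw [wStar_single, wStar_single, wStar_single, wStar_single, add_assoc, mul_assoc]

lemma single_eq_smul_Lw (G : AddSubgroup ℂ) (s : ↥G) (k : ℤ) (t : ℂ) :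
    (Finsupp.single (s, k) t : WnG G) = t • Lw G s k := by
  simp [Lw, Finsupp.smul_single]

lemma compat_basis (n : ℤ) (G : AddSubgroup ℂ) (r p q : ↥G × ℤ) (c a b : ℂ) :
    (2 : ℂ) • wStar G (Finsupp.single r c)
        (wBracket n G (Finsupp.single p a) (Finsupp.single q b)) =
      wBracket n G (wStar G (Finsupp.single r c) (Finsupp.single p a)) (Finsupp.single q b) +
        wBracket n G (Finsupp.single p a)
          (wStar G (Finsupp.single r c) (Finsupp.single q b)) := by
  obtain ⟨r1, r2⟩ := r; obtain ⟨p1, p2⟩ := p; obtain ⟨q1, q2⟩ := q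
  rw [wStar_single, wStar_single, wBracket_single, wBracket_single, wBracket_single]
  simp only [wBracketBasis, Lw, Prod.mk_add_mk, map_add, map_smul, wStar_single, mul_one]
  simp only [single_eq_smul_Lw, AddSubgroup.coe_add, Int.cast_add]
  simp only [add_assoc, add_comm, add_left_comm]
  module

lemma compat (n : ℤ) (G : AddSubgroup ℂ) (m x y : WnG G) :
    (2 : ℂ) • wStar G m (wBracket n G x y) =
      wBracket n G (wStar G m x) y + wBracket n G x (wStar G m y) := by
  induction m using Finsupp.induction_linear with
  | zero => simp
  | add a b ha hb =>
    simp only [map_add, LinearMap.add_apply, smul_add] at *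
    rw [ha, hb]; abel
  | single r c =>
    induction x using Finsupp.induction_linear with
    | zero => simp
    | add a b ha hb =>
      simp only [map_add, LinearMap.add_apply, smul_add] at *
      rw [ha, hb]; abel
    | single p a =>
      induction y using Finsupp.induction_linear with
      | zero => simp
      | add a b ha hb =>
        simp only [map_add, LinearMap.add_apply, smul_add] at *
        rw [ha, hb]; abel
      | single q b => exact compat_basis n G r p q c a b

/-- every mutation x·y := (x ∗ w) ∗ y of the group algebra
(W_n(G), ∗) is commutative, associative, and satisfies the transposed Poisson
compatibility with the Lie bracket of W_n(G). -/
theorem stmt11 (n : ℤ) (G : AddSubgroup ℂ) (hG : G ≠ ⊥) (w : WnG G) :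
    (∀ x y : WnG G, wStar G (wStar G x w) y = wStar G (wStar G y w) x) ∧
    (∀ x y z : WnG G,
      wStar G (wStar G (wStar G (wStar G x w) y) w) z =
        wStar G (wStar G x w) (wStar G (wStar G y w) z)) ∧
    (∀ x y z : WnG G,
      (2 : ℂ) • wStar G (wStar G z w) (wBracket n G x y) =
        wBracket n G (wStar G (wStar G z w) x) y +
          wBracket n G x (wStar G (wStar G z w) y)) := by
  have hlc : ∀ a b c : WnG G, wStar G a (wStar G b c) = wStar G b (wStar G a c) := by
    intro a b c
    rw [← wStar_assoc, wStar_comm G a b, wStar_assoc]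
  refine ⟨fun x y => ?_, fun x y z => ?_, fun x y z => compat n G (wStar G z w) x y⟩
  · simp only [wStar_assoc, wStar_comm, hlc]
  · simp only [wStar_assoc, wStar_comm, hlc]
end

section
/- Let n ∈ ℤ, let G be a nontrivial additive subgroup of ℂ, and let · be a nonzero commutative associative bilinear multiplication on the not-finitely graded Witt algebra W_n(G) satisfying the transposed Poisson compatibility 2·(z·[x,y]) = [z·x, y] + [x, z·y]. Then (W_n(G), ·, [·,·]) is not a Poisson algebra; that is, the Leibniz identity [x, y·z] = [x,y]·z + y·[x,z] fails for some x, y, z ∈ W_n(G). -/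
lemma wB_single (n : ℤ) (G : AddSubgroup ℂ) (p q : ↥G × ℤ) :
    wBracket n G (Finsupp.single p 1) (Finsupp.single q 1) = wBracketBasis n G p q := by
  simp [wBracket, Finsupp.lift_apply, Finsupp.sum_single_index]

lemma wB_anti (n : ℤ) (G : AddSubgroup ℂ) (x y : WnG G) :
    wBracket n G x y = - wBracket n G y x := by
  have h : (wBracket n G) + (wBracket n G).flip = 0 := by
    ext p q : 4
    simp only [LinearMap.comp_apply, Finsupp.lsingle_apply, LinearMap.add_apply,
      LinearMap.flip_apply, LinearMap.zero_apply, wB_single]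
    show wBracketBasis n G p q + wBracketBasis n G q p = 0
    unfold wBracketBasis
    rw [add_comm q.1 p.1, add_comm q.2 p.2]
    module
  have h2 := LinearMap.congr_fun (LinearMap.congr_fun h x) y
  simp only [LinearMap.add_apply, LinearMap.flip_apply, LinearMap.zero_apply] at h2
  exact eq_neg_of_add_eq_zero_left h2

-- perfectness generator
lemma wB_gen (n : ℤ) (G : AddSubgroup ℂ) (a : ↥G) (ha : (a : ℂ) ≠ 0) (γ : ↥G) (k : ℤ) :
    Lw G γ k = (-(4 * (a : ℂ)))⁻¹ •
      (wBracket n G (Lw G a 0) (Lw G (γ - a) k) -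
        wBracket n G (Lw G (-a) 0) (Lw G (γ + a) k)) := by
  have h1 : wBracket n G (Lw G a 0) (Lw G (γ - a) k) = wBracketBasis n G (a, 0) (γ - a, k) :=
    wB_single n G _ _
  have h2 : wBracket n G (Lw G (-a) 0) (Lw G (γ + a) k) =
      wBracketBasis n G (-a, 0) (γ + a, k) := wB_single n G _ _
  rw [h1, h2]
  unfold wBracketBasis
  have e1 : a + (γ - a) = γ := by abel
  have e2 : (-a) + (γ + a) = γ := by abel
  simp only [e1, e2, zero_add]
  push_cast
  match_scalars
  · field_simp
    ring
  · ring

/-- a nonzero transposed Poisson structure on W_n(G) is never a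
Poisson structure: the Leibniz identity fails for some x, y, z. -/
theorem stmt13 (n : ℤ) (G : AddSubgroup ℂ) (hG : G ≠ ⊥)
    (mul : WnG G →ₗ[ℂ] WnG G →ₗ[ℂ] WnG G) (hne : mul ≠ 0)
    (hcomm : ∀ x y : WnG G, mul x y = mul y x)
    (hassoc : ∀ x y z : WnG G, mul (mul x y) z = mul x (mul y z))
    (hcompat : ∀ x y z : WnG G,
      (2 : ℂ) • mul z (wBracket n G x y) =
        wBracket n G (mul z x) y + wBracket n G x (mul z y)) :
    ∃ x y z : WnG G,
      wBracket n G x (mul y z) ≠ mul (wBracket n G x y) z + mul y (wBracket n G x z) := by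
  by_contra hcon
  push_neg at hcon
  have hA : ∀ x y z : WnG G, mul (wBracket n G x y) z = - mul (wBracket n G y x) z := by
    intro x y z
    rw [wB_anti n G x y, map_neg, LinearMap.neg_apply]
  have hI : ∀ x y z : WnG G, mul (wBracket n G x z) y = mul (wBracket n G y z) x := by
    intro x y z
    have hc := hcompat x y z
    rw [hcon x z y] at hc
    rw [wB_anti n G (mul z x) y, hcon y z x, wB_anti n G y x, map_neg, two_smul] at hc
    try simp only [LinearMap.neg_apply] at hc
    have h9 : (mul (wBracket n G x z)) y - (mul (wBracket n G y z)) x =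
        (-((mul (wBracket n G y z)) x + -((mul z) (wBracket n G x y))) +
          ((mul (wBracket n G x z)) y + (mul z) (wBracket n G x y))) -
          ((mul z) (wBracket n G x y) + (mul z) (wBracket n G x y)) := by abel
    rw [← hc, sub_self] at h9
    exact sub_eq_zero.mp h9
  have hzero : ∀ x y z : WnG G, mul (wBracket n G x y) z = 0 := by
    intro x y z
    have hd : mul (wBracket n G x y) z = - mul (wBracket n G x y) z := by
      calc mul (wBracket n G x y) z = mul (wBracket n G z y) x := hI x z y
        _ = - mul (wBracket n G y z) x := hA z y x
        _ = - mul (wBracket n G x z) y := by rw [hI y x z]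
        _ = mul (wBracket n G z x) y := by rw [hA x z y]; rw [neg_neg]
        _ = mul (wBracket n G y x) z := hI z y x
        _ = - mul (wBracket n G x y) z := hA y x z
    have h2 : (2 : ℂ) • mul (wBracket n G x y) z = 0 := by
      rw [two_smul]
      exact add_eq_zero_iff_eq_neg.mpr hd
    have := smul_eq_zero.mp h2
    exact this.resolve_left (by norm_num)
  -- nontrivial element
  obtain ⟨a, ha⟩ : ∃ a : ↥G, (a : ℂ) ≠ 0 := by
    by_contra h
    push_neg at h
    apply hG
    ext x
    simp only [AddSubgroup.mem_bot]
    constructor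
    · intro hx
      exact_mod_cast h ⟨x, hx⟩
    · rintro rfl
      exact G.zero_mem
  have hL : ∀ (γ : ↥G) (k : ℤ) (z : WnG G), mul (Lw G γ k) z = 0 := by
    intro γ k z
    rw [wB_gen n G a ha γ k, map_smul, map_sub, LinearMap.smul_apply, LinearMap.sub_apply,
      hzero, hzero, sub_self, smul_zero]
  have hmul0 : ∀ w z : WnG G, mul w z = 0 := by
    intro w z
    induction w using Finsupp.induction_linear with
    | zero => simp
    | add f g hf hg => rw [map_add, LinearMap.add_apply, hf, hg, add_zero]
    | single p c =>
      have : Finsupp.single p c = c • Lw G p.1 p.2 := by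
        rw [Lw, Finsupp.smul_single, smul_eq_mul, mul_one]
      rw [this, map_smul, LinearMap.smul_apply, hL, smul_zero]
  apply hne
  ext w z : 4
  simp only [LinearMap.comp_apply, Finsupp.lsingle_apply, LinearMap.zero_apply]
  rw [hmul0]
end

section
/- Let n ∈ ℤ and let G be a nontrivial additive subgroup of ℂ. Then every commutative associative bilinear multiplication · on the not-finitely graded Heisenberg–Witt algebra HW_n(G) satisfying the transposed Poisson compatibility 2·(z·[x,y]) = [z·x, y] + [x, z·y] for all x, y, z is identically zero; that is, HW_n(G) admits no nontrivial transposed Poisson structure. -/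
/-- Basis of the not-finitely graded Heisenberg–Witt algebra HW_n(G):
elements `L α i` and `H α i` for α ∈ G, i ∈ ℤ. -/
inductive HWBasis (G : AddSubgroup ℂ) : Type
  | L : ↥G → ℤ → HWBasis G
  | H : ↥G → ℤ → HWBasis G

/-- Underlying vector space of HW_n(G): the free ℂ-module on `HWBasis G`. -/
abbrev HWnG (G : AddSubgroup ℂ) : Type := HWBasis G →₀ ℂ

noncomputable def Lh (G : AddSubgroup ℂ) (α : ↥G) (i : ℤ) : HWnG G :=
  Finsupp.single (HWBasis.L α i) 1

noncomputable def Hh (G : AddSubgroup ℂ) (α : ↥G) (i : ℤ) : HWnG G :=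
  Finsupp.single (HWBasis.H α i) 1

/-- The Lie bracket of HW_n(G) on basis elements. -/
noncomputable def hwBracketBasis (n : ℤ) (G : AddSubgroup ℂ) :
    HWBasis G → HWBasis G → HWnG G
  | HWBasis.L α i, HWBasis.L β j =>
      ((β : ℂ) - (α : ℂ)) • Lh G (α + β) (i + j) +
        ((j : ℂ) - (i : ℂ)) • Lh G (α + β) (i + j + n)
  | HWBasis.L α i, HWBasis.H β j =>
      (β : ℂ) • Hh G (α + β) (i + j) + (j : ℂ) • Hh G (α + β) (i + j + n)
  | HWBasis.H α i, HWBasis.L β j =>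
      -((α : ℂ) • Hh G (β + α) (j + i) + (i : ℂ) • Hh G (β + α) (j + i + n))
  | HWBasis.H _ _, HWBasis.H _ _ => 0

/-- The Lie bracket of HW_n(G), extended bilinearly from the basis. -/
noncomputable def hwBracket (n : ℤ) (G : AddSubgroup ℂ) :
    HWnG G →ₗ[ℂ] HWnG G →ₗ[ℂ] HWnG G :=
  Finsupp.lift (HWnG G →ₗ[ℂ] HWnG G) ℂ (HWBasis G) fun x =>
    Finsupp.lift (HWnG G) ℂ (HWBasis G) fun y => hwBracketBasis n G x y

/-- `φ` is a ½-derivation of HW_n(G). -/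
def IsHalfDerivationHW (n : ℤ) (G : AddSubgroup ℂ) (φ : HWnG G →ₗ[ℂ] HWnG G) : Prop :=
  ∀ x y : HWnG G, φ (hwBracket n G x y) =
    (1 / 2 : ℂ) • (hwBracket n G (φ x) y + hwBracket n G x (φ y))

lemma hw_ss (n : ℤ) (G : AddSubgroup ℂ) (b b' : HWBasis G) :
    hwBracket n G (Finsupp.single b 1) (Finsupp.single b' 1) = hwBracketBasis n G b b' := by
  simp [hwBracket, Finsupp.lift_apply, Finsupp.sum_single_index]

/-- coefficient of [v, H β j] at L-basis points : zero -/
lemma brkR_H_L (n : ℤ) (G : AddSubgroup ℂ) (v : HWnG G) (β : ↥G) (j : ℤ) (ρ : ↥G) (s : ℤ) :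
    hwBracket n G v (Hh G β j) (HWBasis.L ρ s) = 0 := by
  induction v using Finsupp.induction_linear with
  | zero => simp
  | add f g hf hg => simp [hf, hg]
  | single a c =>
      rw [show (Finsupp.single a c) = c • Finsupp.single a (1:ℂ) by simp,
        map_smul, LinearMap.smul_apply, Finsupp.smul_apply, Hh, hw_ss]
      cases a with
      | L μ m => simp [hwBracketBasis, Hh, Finsupp.single_apply]
      | H μ m => simp [hwBracketBasis]

/-- coefficient of [v, H β j] at H-basis points -/
lemma brkR_H_H (n : ℤ) (G : AddSubgroup ℂ) (v : HWnG G) (β : ↥G) (j : ℤ) (ρ : ↥G) (s : ℤ) :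
    hwBracket n G v (Hh G β j) (HWBasis.H ρ s)
      = (β : ℂ) * v (HWBasis.L (ρ - β) (s - j)) + (j : ℂ) * v (HWBasis.L (ρ - β) (s - j - n)) := by
  induction v using Finsupp.induction_linear with
  | zero => simp
  | add f g hf hg => simp [hf, hg]; ring
  | single a c =>
      rw [show (Finsupp.single a c) = c • Finsupp.single a (1:ℂ) by simp,
        map_smul, LinearMap.smul_apply, Finsupp.smul_apply, Hh, hw_ss]
      cases a with
      | H μ m => simp [hwBracketBasis, Finsupp.single_apply]
      | L μ m =>
          classical
          simp only [hwBracketBasis, Hh, Finsupp.add_apply, Finsupp.smul_apply,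
            Finsupp.single_apply, smul_eq_mul, HWBasis.H.injEq, HWBasis.L.injEq, reduceCtorEq]
          by_cases h1 : μ = ρ - β
          · subst h1
            simp only [sub_add_cancel, true_and, eq_self_iff_true, if_true]
            by_cases hn : n = 0
            · subst hn
              simp only [add_zero, sub_zero]
              split_ifs <;> (try (exfalso; omega)) <;> (try subst_vars) <;> push_cast <;> ring1
            · split_ifs <;> (try (exfalso; omega)) <;> (try subst_vars) <;> push_cast <;> ring1
          · have e : ¬ (μ + β = ρ) := fun h => h1 (eq_sub_of_add_eq h)
            simp [h1, e]

/-- coefficient of [v, L β j] at H-basis points -/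
lemma brkR_L_H (n : ℤ) (G : AddSubgroup ℂ) (v : HWnG G) (β : ↥G) (j : ℤ) (ρ : ↥G) (s : ℤ) :
    hwBracket n G v (Lh G β j) (HWBasis.H ρ s)
      = -((ρ : ℂ) - β) * v (HWBasis.H (ρ - β) (s - j))
        - ((s : ℂ) - j - n) * v (HWBasis.H (ρ - β) (s - j - n)) := by
  induction v using Finsupp.induction_linear with
  | zero => simp
  | add f g hf hg => simp [hf, hg]; ring
  | single a c =>
      rw [show (Finsupp.single a c) = c • Finsupp.single a (1:ℂ) by simp,
        map_smul, LinearMap.smul_apply, Finsupp.smul_apply, Lh, hw_ss]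
      cases a with
      | L μ m => simp [hwBracketBasis, Lh, Finsupp.single_apply]
      | H μ m =>
          classical
          simp only [hwBracketBasis, Hh, Finsupp.neg_apply, Finsupp.add_apply,
            Finsupp.smul_apply, Finsupp.single_apply, smul_eq_mul,
            HWBasis.H.injEq, HWBasis.L.injEq, reduceCtorEq]
          by_cases h1 : μ = ρ - β
          · subst h1
            have e2 : ((ρ - β : ↥G) : ℂ) = (ρ : ℂ) - β := by push_cast; ring
            simp only [add_sub_cancel, show β + (ρ - β) = ρ by rw [add_comm, sub_add_cancel],
              true_and, eq_self_iff_true, if_true, e2]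
            by_cases hn : n = 0
            · subst hn
              simp only [add_zero, sub_zero]
              split_ifs <;> (try (exfalso; omega)) <;> (try subst_vars) <;> push_cast <;> ring1
            · split_ifs <;> (try (exfalso; omega)) <;> (try subst_vars) <;> push_cast <;> ring1
          · have e : ¬ (β + μ = ρ) := fun h => h1 (eq_sub_of_add_eq' h)
            simp [h1, e]

/-- coefficient of [L α i, v] at H-basis points -/
lemma brkL_L_H (n : ℤ) (G : AddSubgroup ℂ) (v : HWnG G) (α : ↥G) (i : ℤ) (ρ : ↥G) (s : ℤ) :
    hwBracket n G (Lh G α i) v (HWBasis.H ρ s)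
      = ((ρ : ℂ) - α) * v (HWBasis.H (ρ - α) (s - i))
        + ((s : ℂ) - i - n) * v (HWBasis.H (ρ - α) (s - i - n)) := by
  induction v using Finsupp.induction_linear with
  | zero => simp
  | add f g hf hg => simp [hf, hg]; ring
  | single a c =>
      rw [show (Finsupp.single a c) = c • Finsupp.single a (1:ℂ) by simp,
        map_smul, Finsupp.smul_apply, Lh, hw_ss]
      cases a with
      | L μ m => simp [hwBracketBasis, Lh, Finsupp.single_apply]
      | H μ m =>
          classical
          simp only [hwBracketBasis, Hh, Finsupp.add_apply,
            Finsupp.smul_apply, Finsupp.single_apply, smul_eq_mul,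
            HWBasis.H.injEq, HWBasis.L.injEq, reduceCtorEq]
          by_cases h1 : μ = ρ - α
          · subst h1
            have e2 : ((ρ - α : ↥G) : ℂ) = (ρ : ℂ) - α := by push_cast; ring
            simp only [show α + (ρ - α) = ρ by rw [add_comm, sub_add_cancel],
              true_and, eq_self_iff_true, if_true, e2]
            by_cases hn : n = 0
            · subst hn
              simp only [add_zero, sub_zero]
              split_ifs <;> (try (exfalso; omega)) <;> (try subst_vars) <;> push_cast <;> ring1
            · split_ifs <;> (try (exfalso; omega)) <;> (try subst_vars) <;> push_cast <;> ring1
          · have e : ¬ (α + μ = ρ) := fun h => h1 (eq_sub_of_add_eq' h)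
            simp [h1, e]

/-- coefficient of [L α i, v] at L-basis points -/
lemma brkL_L_L (n : ℤ) (G : AddSubgroup ℂ) (v : HWnG G) (α : ↥G) (i : ℤ) (ρ : ↥G) (s : ℤ) :
    hwBracket n G (Lh G α i) v (HWBasis.L ρ s)
      = ((ρ : ℂ) - 2*α) * v (HWBasis.L (ρ - α) (s - i))
        + ((s : ℂ) - 2*i - n) * v (HWBasis.L (ρ - α) (s - i - n)) := by
  induction v using Finsupp.induction_linear with
  | zero => simp
  | add f g hf hg => simp [hf, hg]; ring
  | single a c =>
      rw [show (Finsupp.single a c) = c • Finsupp.single a (1:ℂ) by simp,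
        map_smul, Finsupp.smul_apply, Lh, hw_ss]
      cases a with
      | H μ m => simp [hwBracketBasis, Hh, Finsupp.single_apply]
      | L μ m =>
          classical
          simp only [hwBracketBasis, Lh, Finsupp.add_apply,
            Finsupp.smul_apply, Finsupp.single_apply, smul_eq_mul,
            HWBasis.H.injEq, HWBasis.L.injEq, reduceCtorEq]
          by_cases h1 : μ = ρ - α
          · subst h1
            have e2 : ((ρ - α : ↥G) : ℂ) = (ρ : ℂ) - α := by push_cast; ring
            simp only [show α + (ρ - α) = ρ by rw [add_comm, sub_add_cancel],
              true_and, eq_self_iff_true, if_true, e2]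
            by_cases hn : n = 0
            · subst hn
              simp only [add_zero, sub_zero]
              split_ifs <;> (try (exfalso; omega)) <;> (try subst_vars) <;> push_cast <;> ring1
            · split_ifs <;> (try (exfalso; omega)) <;> (try subst_vars) <;> push_cast <;> ring1
          · have e : ¬ (α + μ = ρ) := fun h => h1 (eq_sub_of_add_eq' h)
            simp [h1, e]

/-- bracket of two L-type basis vectors -/
lemma brk_LL (n : ℤ) (G : AddSubgroup ℂ) (α : ↥G) (i : ℤ) (β : ↥G) (j : ℤ) :
    hwBracket n G (Lh G α i) (Lh G β j)
      = ((β:ℂ)-(α:ℂ)) • Lh G (α+β) (i+j) + ((j:ℂ)-(i:ℂ)) • Lh G (α+β) (i+j+n) := by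
  show hwBracket n G (Finsupp.single (HWBasis.L α i) 1) (Finsupp.single (HWBasis.L β j) 1) = _
  rw [hw_ss]; rfl

/-- bracket of an L-type and an H-type basis vector -/
lemma brk_LH (n : ℤ) (G : AddSubgroup ℂ) (α : ↥G) (i : ℤ) (β : ↥G) (j : ℤ) :
    hwBracket n G (Lh G α i) (Hh G β j)
      = (β:ℂ) • Hh G (α+β) (i+j) + (j:ℂ) • Hh G (α+β) (i+j+n) := by
  show hwBracket n G (Finsupp.single (HWBasis.L α i) 1) (Finsupp.single (HWBasis.H β j) 1) = _
  rw [hw_ss]; rfl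


/-- Core scalar rigidity: the coefficient system coming from an 𝔥-valued ½-cocycle
on the L-part of HW_n(G) forces all coefficients to vanish. -/
lemma EV_kill (n : ℤ) (G : AddSubgroup ℂ) (q : ↥G) (hq : (q:ℂ) ≠ 0)
    (V : ↥G → ℤ → ↥G → ℤ → ℂ)
    (hEV : ∀ (γ α : ↥G) (i : ℤ) (β : ↥G) (j k : ℤ),
      2*((β:ℂ)-α) * V (α+β) (i+j) γ k + 2*((j:ℂ)-(i:ℂ)) * V (α+β) (i+j+n) γ k
      = -((α:ℂ)+γ) * V α i γ (k-j) - ((k:ℂ)-(j:ℂ)-(n:ℂ)) * V α i γ (k-j-n)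
        + ((β:ℂ)+γ) * V β j γ (k-i) + ((k:ℂ)-(i:ℂ)-(n:ℂ)) * V β j γ (k-i-n)) :
    ∀ μ m γ k, V μ m γ k = 0 := by
  -- zero layer, raw
  have hZ : ∀ (γ α β : ↥G) (k : ℤ),
      2*((β:ℂ)-α) * V (α+β) 0 γ k
      = -((α:ℂ)+γ) * V α 0 γ k - ((k:ℂ)-(n:ℂ)) * V α 0 γ (k-n)
        + ((β:ℂ)+γ) * V β 0 γ k + ((k:ℂ)-(n:ℂ)) * V β 0 γ (k-n) := by
    intro γ α β k
    have h := hEV γ α 0 β 0 k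
    simp only [add_zero, zero_add, sub_zero, Int.cast_zero] at h
    linear_combination h
  -- (Z0)
  have hZ0 : ∀ (γ α : ↥G) (k : ℤ),
      ((γ:ℂ)-α) * V α 0 γ k + ((k:ℂ)-(n:ℂ)) * V α 0 γ (k-n)
      = (γ:ℂ) * V 0 0 γ k + ((k:ℂ)-(n:ℂ)) * V 0 0 γ (k-n) := by
    intro γ α k
    have h := hZ γ α 0 k
    simp only [add_zero, ZeroMemClass.coe_zero, zero_add] at h
    linear_combination h
  -- (Z1)
  have hZ1 : ∀ (γ α β : ↥G) (k : ℤ),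
      ((β:ℂ)-α) * V (α+β) 0 γ k = (β:ℂ) * V β 0 γ k - (α:ℂ) * V α 0 γ k := by
    intro γ α β k
    linear_combination (hZ γ α β k)/2 - (hZ0 γ α k)/2 + (hZ0 γ β k)/2
  -- zero layer is constant in the first index
  have hconst : ∀ (γ : ↥G) (k : ℤ) (δ : ↥G), V δ 0 γ k = V 0 0 γ k := by
    intro γ k δ
    rcases eq_or_ne δ 0 with rfl | hδ
    · rfl
    · have hδ' : (δ:ℂ) ≠ 0 := fun h => hδ (by exact Subtype.ext h)
      have r1 : ∀ k : ℤ, (2*(δ:ℂ)) * V 0 0 γ k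
          = (δ:ℂ) * V δ 0 γ k + (δ:ℂ) * V (-δ) 0 γ k := by
        intro k
        have h := hZ1 γ (-δ) δ k
        simp only [neg_add_cancel] at h
        push_cast at h
        linear_combination h
      have r2 : ∀ k : ℤ, (3*(δ:ℂ)) * V δ 0 γ k
          = (2*(δ:ℂ)) * V (δ+δ) 0 γ k + (δ:ℂ) * V (-δ) 0 γ k := by
        intro k
        have h := hZ1 γ (-δ) (δ+δ) k
        simp only [neg_add_cancel_left] at h
        push_cast at h
        linear_combination h
      have r3 : ∀ k : ℤ, V (δ+δ) 0 γ k = 2 * V δ 0 γ k - V 0 0 γ k := by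
        intro k
        have h : (2*(δ:ℂ)) * V (δ+δ) 0 γ k
            = (2*(δ:ℂ)) * (2 * V δ 0 γ k - V 0 0 γ k) := by
          linear_combination (r1 k) - (r2 k)
        exact mul_left_cancel₀ (mul_ne_zero two_ne_zero hδ') h
      have h1 := hZ0 γ δ k
      have h2 := hZ0 γ (δ+δ) k
      rw [r3 k, r3 (k-n)] at h2
      push_cast at h2
      have h3 : (-2*(δ:ℂ)) * V δ 0 γ k = (-2*(δ:ℂ)) * V 0 0 γ k := by
        linear_combination h2 - 2*h1
      exact mul_left_cancel₀ (mul_ne_zero (by norm_num) hδ') h3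
  -- zero layer vanishes
  have hzero0 : ∀ (γ : ↥G) (k : ℤ) (δ : ↥G), V δ 0 γ k = 0 := by
    intro γ k δ
    have h1 := hZ0 γ q k
    rw [hconst γ k q, hconst γ (k-n) q] at h1
    have h4 : (q:ℂ) * V 0 0 γ k = 0 := by linear_combination -h1
    have h0 := (mul_eq_zero.mp h4).resolve_left hq
    rw [hconst γ k δ, h0]
  -- layer recursion
  have hP : ∀ (γ α : ↥G) (i k : ℤ) (δ : ↥G),
      2*((δ:ℂ) - 2*α) * V δ i γ k - 2*(i:ℂ) * V δ (i+n) γ k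
      = -((α:ℂ)+γ) * V α i γ k - ((k:ℂ)-(n:ℂ)) * V α i γ (k-n) := by
    intro γ α i k δ
    have h := hEV γ α i (δ - α) 0 k
    rw [show α + (δ - α) = δ from by abel] at h
    simp only [add_zero, sub_zero] at h
    rw [hzero0 γ (k-i) (δ-α), hzero0 γ (k-i-n) (δ-α)] at h
    push_cast at h
    linear_combination h
  have hP3 : ∀ (γ : ↥G) (i k : ℤ) (α δ : ↥G),
      -4*(α:ℂ) * V δ i γ k
      = -((α:ℂ)+γ) * V α i γ k - ((k:ℂ)-(n:ℂ)) * V α i γ (k-n)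
        + (γ:ℂ) * V 0 i γ k + ((k:ℂ)-(n:ℂ)) * V 0 i γ (k-n) := by
    intro γ i k α δ
    have h1 := hP γ α i k δ
    have h2 := hP γ 0 i k δ
    push_cast at h2
    linear_combination h1 - h2
  have hconst2 : ∀ (γ : ↥G) (i k : ℤ) (δ : ↥G), V δ i γ k = V 0 i γ k := by
    intro γ i k δ
    have h1 := hP3 γ i k q δ
    have h2 := hP3 γ i k q 0
    have h3 : (-4*(q:ℂ)) * V δ i γ k = (-4*(q:ℂ)) * V 0 i γ k := by
      linear_combination h1 - h2
    exact mul_left_cancel₀ (mul_ne_zero (by norm_num) hq) h3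
  have hfinal0 : ∀ (γ : ↥G) (i k : ℤ), V 0 i γ k = 0 := by
    intro γ i k
    have h := hP3 γ i k q q
    rw [hconst2 γ i k q, hconst2 γ i (k-n) q] at h
    have h4 : (q:ℂ) * V 0 i γ k = 0 := by linear_combination (-1/3 : ℂ) * h
    exact (mul_eq_zero.mp h4).resolve_left hq
  intro μ m γ k
  rw [hconst2 γ m k μ, hfinal0 γ m k]

/-- Rigidity of the "weight-one module" systems (used for the L- resp. H-coefficients
of the products with a Heisenberg argument). -/
lemma WD_kill (n : ℤ) (G : AddSubgroup ℂ) (q : ↥G) (hq : (q:ℂ) ≠ 0) (t : ℂ) (ht : t ≠ 2)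
    (W : ↥G → ℤ → ↥G → ℤ → ℂ)
    (hCL : ∀ (α : ↥G) (i : ℤ) (β : ↥G) (j : ℤ) (ρ : ↥G) (s : ℤ),
      2*(β:ℂ) * W (α+β) (i+j) ρ s + 2*(j:ℂ) * W (α+β) (i+j+n) ρ s
      = ((ρ:ℂ) - (α:ℂ) - t*(α:ℂ)) * W β j (ρ-α) (s-i)
        + ((s:ℂ) - (i:ℂ) - t*(i:ℂ) - (n:ℂ)) * W β j (ρ-α) (s-i-n)) :
    ∀ μ m ρ s, W μ m ρ s = 0 := by
  have hw0 : ∀ (γ α β : ↥G) (s : ℤ),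
      2*(β:ℂ) * W (α+β) 0 (α+β+γ) s
      = ((β:ℂ)+(γ:ℂ)-t*(α:ℂ)) * W β 0 (β+γ) s + ((s:ℂ)-(n:ℂ)) * W β 0 (β+γ) (s-n) := by
    intro γ α β s
    have h := hCL α 0 β 0 (α+β+γ) s
    rw [show α+β+γ-α = β+γ from by abel] at h
    simp only [add_zero, zero_add, sub_zero, Int.cast_zero, mul_zero, zero_mul] at h
    push_cast at h
    linear_combination h
  have hw1 : ∀ (γ β : ↥G) (s : ℤ),
      2*(β:ℂ) * W β 0 (β+γ) s
      = ((β:ℂ)+(γ:ℂ)) * W β 0 (β+γ) s + ((s:ℂ)-(n:ℂ)) * W β 0 (β+γ) (s-n) := by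
    intro γ β s
    have h := hw0 γ 0 β s
    simp only [zero_add, ZeroMemClass.coe_zero, mul_zero, sub_zero] at h
    linear_combination h
  have hw2 : ∀ (γ α β : ↥G) (s : ℤ),
      2*(β:ℂ) * W (α+β) 0 (α+β+γ) s
      = 2*(β:ℂ) * W β 0 (β+γ) s - t*(α:ℂ) * W β 0 (β+γ) s := by
    intro γ α β s
    linear_combination (hw0 γ α β s) - (hw1 γ β s)
  have h2q : ∀ (γ : ↥G) (s : ℤ),
      W (q+q) 0 (q+q+γ) s = (((2:ℂ)-t)/2) * W q 0 (q+γ) s := by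
    intro γ s
    have h := hw2 γ q q s
    have h' : (2*(q:ℂ)) * W (q+q) 0 (q+q+γ) s
        = (2*(q:ℂ)) * ((((2:ℂ)-t)/2) * W q 0 (q+γ) s) := by
      linear_combination h
    exact mul_left_cancel₀ (mul_ne_zero two_ne_zero hq) h'
  have hqz : ∀ (γ : ↥G) (s : ℤ), W q 0 (q+γ) s = 0 := by
    intro γ s
    have e2 := hw1 γ (q+q) s
    rw [h2q γ s, h2q γ (s-n)] at e2
    push_cast at e2
    have e1 := hw1 γ q s
    have hz : ((((2:ℂ)-t)/2) * (q:ℂ)) * W q 0 (q+γ) s = 0 := by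
      linear_combination e2 - (((2:ℂ)-t)/2) * e1
    have hne : (((2:ℂ)-t)/2) * (q:ℂ) ≠ 0 :=
      mul_ne_zero (div_ne_zero (sub_ne_zero.mpr (Ne.symm ht)) two_ne_zero) hq
    exact (mul_eq_zero.mp hz).resolve_left hne
  have hzero0 : ∀ (δ ρ : ↥G) (s : ℤ), W δ 0 ρ s = 0 := by
    intro δ ρ s
    have h := hw2 (ρ-δ) (δ-q) q s
    rw [show δ-q+q = δ from by abel, show δ+(ρ-δ) = ρ from by abel] at h
    rw [hqz (ρ-δ) s] at h
    have hz : (2*(q:ℂ)) * W δ 0 ρ s = 0 := by linear_combination h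
    exact (mul_eq_zero.mp hz).resolve_left (mul_ne_zero two_ne_zero hq)
  intro μ m ρ s
  have h := hCL (μ-q) m q 0 ρ s
  rw [show μ-q+q = μ from by abel] at h
  simp only [add_zero] at h
  rw [hzero0 q (ρ-(μ-q)) (s-m), hzero0 q (ρ-(μ-q)) (s-m-n)] at h
  have hz : (2*(q:ℂ)) * W μ m ρ s = 0 := by push_cast at h; linear_combination h
  exact (mul_eq_zero.mp hz).resolve_left (mul_ne_zero two_ne_zero hq)

/-- An 𝔥-valued ½-cocycle on the L-part of HW_n(G) with vanishing L-coefficients vanishes. -/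
lemma cocycle_kill (n : ℤ) (G : AddSubgroup ℂ) (q : ↥G) (hq : (q:ℂ) ≠ 0)
    (Θ : ↥G → ℤ → HWnG G)
    (hL : ∀ (α : ↥G) (i : ℤ) (ρ : ↥G) (s : ℤ), Θ α i (HWBasis.L ρ s) = 0)
    (hE : ∀ (α : ↥G) (i : ℤ) (β : ↥G) (j : ℤ),
      (2:ℂ) • (((β:ℂ) - (α:ℂ)) • Θ (α+β) (i+j) + ((j:ℂ) - (i:ℂ)) • Θ (α+β) (i+j+n))
        = hwBracket n G (Θ α i) (Lh G β j) + hwBracket n G (Lh G α i) (Θ β j)) :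
    ∀ α i, Θ α i = 0 := by
  have hEV : ∀ (γ α : ↥G) (i : ℤ) (β : ↥G) (j k : ℤ),
      2*((β:ℂ)-(α:ℂ)) * Θ (α+β) (i+j) (HWBasis.H (α+β+γ) k)
        + 2*((j:ℂ)-(i:ℂ)) * Θ (α+β) (i+j+n) (HWBasis.H (α+β+γ) k)
      = -((α:ℂ)+(γ:ℂ)) * Θ α i (HWBasis.H (α+γ) (k-j))
          - ((k:ℂ)-(j:ℂ)-(n:ℂ)) * Θ α i (HWBasis.H (α+γ) (k-j-n))
        + ((β:ℂ)+(γ:ℂ)) * Θ β j (HWBasis.H (β+γ) (k-i))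
          + ((k:ℂ)-(i:ℂ)-(n:ℂ)) * Θ β j (HWBasis.H (β+γ) (k-i-n)) := by
    intro γ α i β j k
    have h := congrArg (fun w : HWnG G => w (HWBasis.H (α+β+γ) k)) (hE α i β j)
    simp only [Finsupp.add_apply, Finsupp.smul_apply, smul_eq_mul] at h
    rw [brkR_L_H, brkL_L_H] at h
    rw [show α+β+γ-β = α+γ from by abel, show α+β+γ-α = β+γ from by abel] at h
    push_cast at h
    linear_combination h
  have hV := EV_kill n G q hq (fun μ m γ k => Θ μ m (HWBasis.H (μ+γ) k)) hEV
  intro α i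
  ext pt
  cases pt with
  | L ρ s => simpa using hL α i ρ s
  | H ρ s =>
      have h := hV α i (ρ-α) s
      rw [show α+(ρ-α) = ρ from by abel] at h
      simpa using h


/-- HW_n(G) admits no nontrivial transposed Poisson structure:
every compatible commutative associative multiplication is zero. -/
theorem stmt18 (n : ℤ) (G : AddSubgroup ℂ) (hG : G ≠ ⊥)
    (mul : HWnG G →ₗ[ℂ] HWnG G →ₗ[ℂ] HWnG G)
    (hcomm : ∀ x y : HWnG G, mul x y = mul y x)
    (hassoc : ∀ x y z : HWnG G, mul (mul x y) z = mul x (mul y z))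
    (hcompat : ∀ x y z : HWnG G,
      (2 : ℂ) • mul z (hwBracket n G x y) =
        hwBracket n G (mul z x) y + hwBracket n G x (mul z y)) :
    mul = 0 := by

  classical
  obtain ⟨q, hq0⟩ := (AddSubgroup.ne_bot_iff_exists_ne_zero).mp hG
  have hq : (q:ℂ) ≠ 0 := fun h => hq0 (Subtype.ext h)
  -- STEP 1 : the L-coefficients of any product `z · H_{μ,m}` vanish.
  have step1 : ∀ (z : HWnG G) (μ : ↥G) (m : ℤ) (ρ : ↥G) (s : ℤ),
      mul z (Hh G μ m) (HWBasis.L ρ s) = 0 := by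
    intro z
    have hCL : ∀ (α : ↥G) (i : ℤ) (β : ↥G) (j : ℤ) (ρ : ↥G) (s : ℤ),
        2*(β:ℂ) * (mul z (Hh G (α+β) (i+j)) (HWBasis.L ρ s))
          + 2*(j:ℂ) * (mul z (Hh G (α+β) (i+j+n)) (HWBasis.L ρ s))
        = ((ρ:ℂ) - (α:ℂ) - 1*(α:ℂ)) * (mul z (Hh G β j) (HWBasis.L (ρ-α) (s-i)))
          + ((s:ℂ) - (i:ℂ) - 1*(i:ℂ) - (n:ℂ)) * (mul z (Hh G β j) (HWBasis.L (ρ-α) (s-i-n))) := by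
      intro α i β j ρ s
      have h := hcompat (Lh G α i) (Hh G β j) z
      rw [brk_LH] at h
      simp only [map_add, map_smul] at h
      have h2 := congrArg (fun w : HWnG G => w (HWBasis.L ρ s)) h
      simp only [Finsupp.add_apply, Finsupp.smul_apply, smul_eq_mul] at h2
      rw [brkR_H_L, brkL_L_L] at h2
      linear_combination h2
    exact WD_kill n G q hq 1 (by norm_num)
      (fun μ m ρ s => mul z (Hh G μ m) (HWBasis.L ρ s)) hCL
  -- STEP 2 : products H · L vanish.
  have step2 : ∀ (γ' : ↥G) (k' : ℤ) (α : ↥G) (i : ℤ),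
      mul (Hh G γ' k') (Lh G α i) = 0 := by
    intro γ' k'
    refine cocycle_kill n G q hq (fun α i => mul (Hh G γ' k') (Lh G α i)) ?_ ?_
    · intro α i ρ s
      show mul (Hh G γ' k') (Lh G α i) (HWBasis.L ρ s) = 0
      rw [hcomm]
      exact step1 (Lh G α i) γ' k' ρ s
    · intro α i β j
      have h := hcompat (Lh G α i) (Lh G β j) (Hh G γ' k')
      rw [brk_LL] at h
      simp only [map_add, map_smul] at h
      exact h
  have stepLH : ∀ (ζ : ↥G) (t' : ℤ) (μ : ↥G) (m : ℤ),
      mul (Lh G ζ t') (Hh G μ m) = 0 := by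
    intro ζ t' μ m
    rw [hcomm]
    exact step2 μ m ζ t'
  -- STEP 3 : products H · H vanish.
  have step3 : ∀ (γ' : ↥G) (k' : ℤ) (μ : ↥G) (m : ℤ),
      mul (Hh G γ' k') (Hh G μ m) = 0 := by
    intro γ' k'
    have hDD : ∀ (α : ↥G) (i : ℤ) (β : ↥G) (j : ℤ) (ρ : ↥G) (s : ℤ),
        2*(β:ℂ) * (mul (Hh G γ' k') (Hh G (α+β) (i+j)) (HWBasis.H ρ s))
          + 2*(j:ℂ) * (mul (Hh G γ' k') (Hh G (α+β) (i+j+n)) (HWBasis.H ρ s))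
        = ((ρ:ℂ) - (α:ℂ) - 0*(α:ℂ)) * (mul (Hh G γ' k') (Hh G β j) (HWBasis.H (ρ-α) (s-i)))
          + ((s:ℂ) - (i:ℂ) - 0*(i:ℂ) - (n:ℂ)) * (mul (Hh G γ' k') (Hh G β j) (HWBasis.H (ρ-α) (s-i-n))) := by
      intro α i β j ρ s
      have h := hcompat (Lh G α i) (Hh G β j) (Hh G γ' k')
      rw [brk_LH] at h
      simp only [map_add, map_smul] at h
      rw [step2 γ' k' α i] at h
      have h2 := congrArg (fun w : HWnG G => w (HWBasis.H ρ s)) h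
      simp only [map_zero, LinearMap.zero_apply, Finsupp.add_apply, Finsupp.smul_apply,
        smul_eq_mul, Finsupp.zero_apply, zero_add] at h2
      rw [brkL_L_H] at h2
      linear_combination h2
    have hDk := WD_kill n G q hq 0 (by norm_num)
      (fun μ m ρ s => mul (Hh G γ' k') (Hh G μ m) (HWBasis.H ρ s)) hDD
    intro μ m
    ext pt
    cases pt with
    | L ρ s => simpa using step1 (Hh G γ' k') μ m ρ s
    | H ρ s => simpa using hDk μ m ρ s
  -- STEP 4 : the L-coefficients of any product L · L vanish.
  have step4 : ∀ (ζ : ↥G) (t' : ℤ) (α : ↥G) (i : ℤ) (ρ : ↥G) (s : ℤ),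
      mul (Lh G ζ t') (Lh G α i) (HWBasis.L ρ s) = 0 := by
    intro ζ t' α i ρ s
    have h := hcompat (Lh G α i) (Hh G q 0) (Lh G ζ t')
    rw [brk_LH] at h
    simp only [map_add, map_smul] at h
    rw [stepLH ζ t' (α+q) (i+0), stepLH ζ t' (α+q) (i+0+n), stepLH ζ t' q 0] at h
    have h2 := congrArg (fun w : HWnG G => w (HWBasis.H (ρ+q) s)) h
    simp only [map_zero, LinearMap.zero_apply, Finsupp.add_apply, Finsupp.smul_apply,
      smul_eq_mul, Finsupp.zero_apply, smul_zero, mul_zero, add_zero, zero_add] at h2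
    rw [brkR_H_H] at h2
    rw [show ρ+q-q = ρ from by abel] at h2
    have hz : (q:ℂ) * (mul (Lh G ζ t') (Lh G α i) (HWBasis.L ρ (s-0))) = 0 := by
      linear_combination -h2
    rw [sub_zero] at hz
    exact (mul_eq_zero.mp hz).resolve_left hq
  -- STEP 5 : products L · L vanish.
  have step5 : ∀ (ζ : ↥G) (t' : ℤ) (α : ↥G) (i : ℤ),
      mul (Lh G ζ t') (Lh G α i) = 0 := by
    intro ζ t'
    refine cocycle_kill n G q hq (fun α i => mul (Lh G ζ t') (Lh G α i)) (step4 ζ t') ?_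
    intro α i β j
    have h := hcompat (Lh G α i) (Lh G β j) (Lh G ζ t')
    rw [brk_LL] at h
    simp only [map_add, map_smul] at h
    exact h
  -- Assembly.
  have key : ∀ x' y' : HWnG G, mul x' y' = 0 := by
    intro x' y'
    induction x' using Finsupp.induction_linear with
    | zero => simp
    | add f g hf hg => simp [hf, hg]
    | single a c =>
        induction y' using Finsupp.induction_linear with
        | zero => simp
        | add f g hf hg => simp [hf, hg]
        | single b d =>
            have hbase : mul (Finsupp.single a 1) (Finsupp.single b 1) = 0 := by
              cases a with
              | L ζ t' =>
                  cases b with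
                  | L α i => exact step5 ζ t' α i
                  | H μ m => exact stepLH ζ t' μ m
              | H γ' k' =>
                  cases b with
                  | L α i => exact step2 γ' k' α i
                  | H μ m => exact step3 γ' k' μ m
            rw [show (Finsupp.single a c) = c • Finsupp.single a (1:ℂ) by simp,
              show (Finsupp.single b d) = d • Finsupp.single b (1:ℂ) by simp]
            simp only [map_smul, LinearMap.smul_apply]
            rw [hbase]
            simp
  exact LinearMap.ext₂ key
end
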